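/- arXiv:math/0702743 — 3 statements merged into one kernel-verified Lean document; each statement's English description precedes it below -/
import Mathlib

section
/- For every Borel probability measure μ on the flat n-torus 𝕋ⁿ and every P ∈ ℝⁿ, there exists a unique weak solution ν ∈ Λ_μ of F(μ,P), and moreover F(μ,P) = −∫_{𝕋ⁿ×ℝⁿ} (|p|²/2 − p·P) dν(x,p). -/
open MeasureTheory Filter Topology

noncomputable section

instance : Fact ((0:ℝ) < 1) := ⟨one_pos⟩

/-- The flat `n`-torus `𝕋ⁿ = ℝⁿ/ℤⁿ`, realized as a product of circles. -/
abbrev Torus (n : ℕ) := Fin n → AddCircle (1 : ℝ)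

/-- Projection `ℝⁿ → 𝕋ⁿ`. -/
def Tproj (n : ℕ) (x : Fin n → ℝ) : Torus n := fun i => (x i : AddCircle (1:ℝ))

/-- A representative in `[0,1)ⁿ` of a point of the torus. -/
def Trep (n : ℕ) (y : Torus n) : Fin n → ℝ := fun i => ((AddCircle.equivIco (1:ℝ) 0) (y i)).1

/-- Euclidean dot product on `ℝⁿ`. -/
def vdot {n : ℕ} (a b : Fin n → ℝ) : ℝ := ∑ i, a i * b i

/-- Euclidean squared norm on `ℝⁿ`. -/
def vnsq {n : ℕ} (a : Fin n → ℝ) : ℝ := ∑ i, (a i)^2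

/-- The gradient (as a vector in `ℝⁿ`) of `φ : ℝⁿ → ℝ`. -/
def vgrad {n : ℕ} (φ : (Fin n → ℝ) → ℝ) (x : Fin n → ℝ) : Fin n → ℝ :=
  fun i => fderiv ℝ φ x (Pi.single i 1)

/-- `ℤⁿ`-periodicity of a function on `ℝⁿ`. -/
def ZPeriodic {n : ℕ} (f : (Fin n → ℝ) → ℝ) : Prop :=
  ∀ (x : Fin n → ℝ) (z : Fin n → ℤ), f (x + fun i => (z i : ℝ)) = f x

/-- `C¹` functions on the torus, identified with `ℤⁿ`-periodic `C¹` functions on `ℝⁿ`. -/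
def IsC1Torus {n : ℕ} (φ : (Fin n → ℝ) → ℝ) : Prop := ContDiff ℝ 1 φ ∧ ZPeriodic φ

/-- The Dirichlet functional `F(μ,P) = (1/2)·inf_{φ ∈ C¹(𝕋ⁿ)} ∫ |∇φ+P|² dμ`. -/
def Fdir {n : ℕ} (μ : Measure (Torus n)) (P : Fin n → ℝ) : ℝ :=
  (1/2) * sInf { r : ℝ | ∃ φ, IsC1Torus φ ∧
    r = ∫ y, vnsq (vgrad φ (Trep n y) + P) ∂μ }

/-- The Legendre transform `F*(μ,J) = sup_P [P·J − F(μ,P)]` (possibly `+∞`). -/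
def FdirStar {n : ℕ} (μ : Measure (Torus n)) (J : Fin n → ℝ) : EReal :=
  ⨆ P : Fin n → ℝ, ((vdot P J - Fdir μ P : ℝ) : EReal)

/-- The set `Λ`: probability measures on `𝕋ⁿ×ℝⁿ` with finite second `p`-moment
which annihilate gradients of `C¹` test functions. -/
def MemLambda {n : ℕ} (ν : Measure (Torus n × (Fin n → ℝ))) : Prop :=
  IsProbabilityMeasure ν ∧ Integrable (fun q => vnsq q.2) ν ∧
    ∀ θ, IsC1Torus θ → ∫ q, vdot q.2 (vgrad θ (Trep n q.1)) ∂ν = 0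

/-- `Λ_μ`: members of `Λ` whose `𝕋ⁿ`-marginal is `μ`. -/
def MemLambdaMu {n : ℕ} (μ : Measure (Torus n)) (ν : Measure (Torus n × (Fin n → ℝ))) : Prop :=
  MemLambda ν ∧ ν.map Prod.fst = μ

/-- `Λ_μ^J`: members of `Λ_μ` with mean momentum `J`. -/
def MemLambdaMuJ {n : ℕ} (μ : Measure (Torus n)) (J : Fin n → ℝ)
    (ν : Measure (Torus n × (Fin n → ℝ))) : Prop :=
  MemLambdaMu μ ν ∧ (fun i => ∫ q, q.2 i ∂ν) = J

/-- The action `∫ (|p|²/2 − p·P) dν`. -/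
def actionInt {n : ℕ} (P : Fin n → ℝ) (ν : Measure (Torus n × (Fin n → ℝ))) : ℝ :=
  ∫ q, (vnsq q.2 / 2 - vdot q.2 P) ∂ν

/-- `ν` is a weak solution of `F(μ,P)`. -/
def IsWeakSolution {n : ℕ} (μ : Measure (Torus n)) (P : Fin n → ℝ)
    (ν : Measure (Torus n × (Fin n → ℝ))) : Prop :=
  MemLambdaMu μ ν ∧ ∀ ξ, MemLambdaMu μ ξ → actionInt P ν ≤ actionInt P ξ

/-- `J` belongs to the subgradient of `F(μ,·)` at `P`. -/
def InSubgradF {n : ℕ} (μ : Measure (Torus n)) (P J : Fin n → ℝ) : Prop :=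
  ∀ P' : Fin n → ℝ, Fdir μ P' ≥ Fdir μ P + vdot J (P' - P)

/-- weak-* convergence of a sequence of measures on the torus. -/
def WeakStarTendsto {n : ℕ} (μs : ℕ → Measure (Torus n)) (μ : Measure (Torus n)) : Prop :=
  ∀ f : C(Torus n, ℝ), Tendsto (fun j => ∫ x, f x ∂(μs j)) atTop (𝓝 (∫ x, f x ∂μ))

/-- weak-* convergence of measures on `𝕋ⁿ×ℝⁿ` (tested on bounded continuous functions). -/
def WeakStarTendstoProd {n : ℕ} (νs : ℕ → Measure (Torus n × (Fin n → ℝ)))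
    (ν : Measure (Torus n × (Fin n → ℝ))) : Prop :=
  ∀ f : BoundedContinuousFunction (Torus n × (Fin n → ℝ)) ℝ,
    Tendsto (fun j => ∫ q, f q ∂(νs j)) atTop (𝓝 (∫ q, f q ∂ν))

/-- The measure `ρ(x)dx` on the torus associated with a periodic density `ρ` on `ℝⁿ`. -/
def densMeasure (n : ℕ) (ρ : (Fin n → ℝ) → ℝ) : Measure (Torus n) :=
  (volume : Measure (Torus n)).withDensity (fun y => ENNReal.ofReal (ρ (Trep n y)))

/-- The functional `E(μ,J,φ) = (1/2)[|J − ∫∇φ dμ|² − ∫|∇φ|² dμ]`. -/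
def Efun {n : ℕ} (μ : Measure (Torus n)) (J : Fin n → ℝ) (φ : (Fin n → ℝ) → ℝ) : ℝ :=
  (1/2) * (vnsq (J - fun i => ∫ y, vgrad φ (Trep n y) i ∂μ)
    - ∫ y, vnsq (vgrad φ (Trep n y)) ∂μ)

/-- The effective Hamiltonian `Ĥ_Ξ(P) = sup_μ [∫Ξ dμ + F(μ,P)]`. -/
def HXi {n : ℕ} (Ξ : C(Torus n, ℝ)) (P : Fin n → ℝ) : ℝ :=
  sSup { r : ℝ | ∃ μ : Measure (Torus n), IsProbabilityMeasure μ ∧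
    r = (∫ y, Ξ y ∂μ) + Fdir μ P }

/-- `Ĥ*_Ξ(J) = sup_μ [∫Ξ dμ − F*(μ,J)]`. -/
def HXiStar {n : ℕ} (Ξ : C(Torus n, ℝ)) (J : Fin n → ℝ) : EReal :=
  sSup { r : EReal | ∃ μ : Measure (Torus n), IsProbabilityMeasure μ ∧
    r = ((∫ y, Ξ y ∂μ : ℝ) : EReal) - FdirStar μ J }

/-- `J` belongs to the subgradient of `Ĥ_Ξ` at `P`. -/
def InSubgradH {n : ℕ} (Ξ : C(Torus n, ℝ)) (P J : Fin n → ℝ) : Prop :=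
  ∀ P' : Fin n → ℝ, HXi Ξ P' ≥ HXi Ξ P + vdot J (P' - P)

/-- An orbit of probability measures on `[0,T]`, continuous for the weak topology. -/
def IsOrbit {n : ℕ} (T : ℝ) (μh : ℝ → Measure (Torus n)) : Prop :=
  (∀ t, IsProbabilityMeasure (μh t)) ∧
  ∀ f : C(Torus n, ℝ), ContinuousOn (fun t => ∫ x, f x ∂(μh t)) (Set.Icc 0 T)

/-- A `C¹` space-time test function on `𝕋ⁿ×(0,T)`, compactly supported in time. -/
def IsTimeTest {n : ℕ} (T : ℝ) (φ : (Fin n → ℝ) → ℝ → ℝ) : Prop :=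
  ContDiff ℝ 1 (fun q : (Fin n → ℝ) × ℝ => φ q.1 q.2) ∧
  (∀ t : ℝ, ZPeriodic (fun x => φ x t)) ∧
  ∃ a b : ℝ, 0 < a ∧ a ≤ b ∧ b < T ∧ ∀ (x : Fin n → ℝ) (t : ℝ), t ∉ Set.Icc a b → φ x t = 0

/-- The time-dependent Dirichlet functional `F(μ̂,P,T)`. -/
def FdirT {n : ℕ} (T : ℝ) (μh : ℝ → Measure (Torus n)) (P : Fin n → ℝ) : ℝ :=
  (1/T) * sInf { r : ℝ | ∃ φ, IsTimeTest T φ ∧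
    r = ∫ t in (0:ℝ)..T, (∫ y, (deriv (φ (Trep n y)) t
        + (1/2) * vnsq (vgrad (fun x => φ x t) (Trep n y) + P)) ∂(μh t)) }

/-- `Λ̂_{T,μ̂}`: lifted orbits over `μ̂`. -/
def IsLiftOrbit {n : ℕ} (T : ℝ) (μh : ℝ → Measure (Torus n))
    (νh : ℝ → Measure (Torus n × (Fin n → ℝ))) : Prop :=
  (∀ t, IsProbabilityMeasure (νh t)) ∧
  (∀ t ∈ Set.Icc (0:ℝ) T, Integrable (fun q => vnsq q.2) (νh t)) ∧
  IntervalIntegrable (fun t => ∫ q, vnsq q.2 ∂(νh t)) volume 0 T ∧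
  (∀ θ : (Fin n → ℝ) → ℝ → ℝ, IsTimeTest T θ →
    ∫ t in (0:ℝ)..T, (∫ q, (deriv (θ (Trep n q.1)) t
      + vdot q.2 (vgrad (fun x => θ x t) (Trep n q.1))) ∂(νh t)) = 0) ∧
  (∀ t, (νh t).map Prod.fst = μh t)

/-- The time-averaged action `(1/T)∫₀ᵀ∫ (|p|²/2 − p·P) dν_(t) dt` of a lifted orbit. -/
def actionT {n : ℕ} (T : ℝ) (P : Fin n → ℝ)
    (νh : ℝ → Measure (Torus n × (Fin n → ℝ))) : ℝ :=
  (1/T) * ∫ t in (0:ℝ)..T, (∫ q, (vnsq q.2 / 2 - vdot q.2 P) ∂(νh t))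

/-- Weak solution of `F(μ̂,P,T)`. -/
def IsWeakSolutionT {n : ℕ} (T : ℝ) (μh : ℝ → Measure (Torus n)) (P : Fin n → ℝ)
    (νh : ℝ → Measure (Torus n × (Fin n → ℝ))) : Prop :=
  IsLiftOrbit T μh νh ∧ ∀ ξh, IsLiftOrbit T μh ξh → actionT T P νh ≤ actionT T P ξh

/-- Orbits in `M̄_T(μ₁,μ₂)`, i.e. from `μ₁` to `μ₂`. -/
def IsOrbitBetween {n : ℕ} (T : ℝ) (μ1 μ2 : Measure (Torus n))
    (μh : ℝ → Measure (Torus n)) : Prop :=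
  IsOrbit T μh ∧ μh 0 = μ1 ∧ μh T = μ2

/-- `H_{Ξ,T}(μ₁,μ₂,P)`. -/
def HXiT {n : ℕ} (Ξ : C(Torus n, ℝ)) (T : ℝ) (μ1 μ2 : Measure (Torus n))
    (P : Fin n → ℝ) : ℝ :=
  sSup { r : ℝ | ∃ μh, IsOrbitBetween T μ1 μ2 μh ∧
    r = (1/T) * (∫ t in (0:ℝ)..T, (∫ x, Ξ x ∂(μh t))) + FdirT T μh P }

/-- The minimal action `A^Ξ_P(y,x,T)` over absolutely continuous paths from `y` to `x`
(paths are encoded by a starting point and an integrable velocity field). -/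
def pathAction {n : ℕ} (Ξ : C(Torus n, ℝ)) (P : Fin n → ℝ) (T : ℝ) (y x : Torus n) : ℝ :=
  sInf { r : ℝ | ∃ (γ0 : Fin n → ℝ) (v : ℝ → Fin n → ℝ),
    (∀ i, IntervalIntegrable (fun s => v s i) volume 0 T) ∧
    IntervalIntegrable (fun s => vnsq (v s)) volume 0 T ∧
    Tproj n γ0 = y ∧ Tproj n (γ0 + fun i => ∫ s in (0:ℝ)..T, v s i) = x ∧
    r = (1/T) * ∫ s in (0:ℝ)..T,
      (vnsq (v s - P) / 2 - Ξ (Tproj n (γ0 + fun i => ∫ u in (0:ℝ)..s, v u i))) }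

/-- The optimal transportation cost `D^T_P(μ₁,μ₂,Ξ)`. -/
def Dcost {n : ℕ} (Ξ : C(Torus n, ℝ)) (P : Fin n → ℝ) (T : ℝ)
    (μ1 μ2 : Measure (Torus n)) : ℝ :=
  sInf { r : ℝ | ∃ σ : Measure (Torus n × Torus n), IsProbabilityMeasure σ ∧
    σ.map Prod.fst = μ1 ∧ σ.map Prod.snd = μ2 ∧
    r = ∫ q, pathAction Ξ P T q.1 q.2 ∂σ }

/-- The squared torus distance `‖a − b − w‖²_{𝕋ⁿ}`. -/
def tDistSq {n : ℕ} (a b : Torus n) (w : Fin n → ℝ) : ℝ :=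
  ∑ k, ‖a k - b k - ((w k : ℝ) : AddCircle (1:ℝ))‖^2

/-- The empirical measure `j⁻¹ Σ δ_{x i}`. -/
def empMeasure {n : ℕ} {j : ℕ} (x : Fin j → Torus n) : Measure (Torus n) :=
  (j : ENNReal)⁻¹ • ∑ i, Measure.dirac (x i)

/-- The combinatorial cost `D^T_P(j,Ξ)`. -/
def DcostJ (n : ℕ) (Ξ : C(Torus n, ℝ)) (P : Fin n → ℝ) (T : ℝ) (j : ℕ) : ℝ :=
  sInf { r : ℝ | ∃ (x : Fin j → Torus n) (σ : Equiv.Perm (Fin j)),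
    r = (j:ℝ)⁻¹ * ∑ i, pathAction Ξ P T (x i) (x (σ i)) }


namespace WSEU

variable {n : ℕ}

abbrev En (n : ℕ) := EuclideanSpace ℝ (Fin n)

def toE {n : ℕ} (a : Fin n → ℝ) : En n := WithLp.toLp 2 a

lemma vnsq_eq (a : Fin n → ℝ) : vnsq a = ‖toE a‖ ^ 2 := by
  rw [EuclideanSpace.norm_eq, Real.sq_sqrt (by positivity)]
  simp [vnsq, toE, sq, Real.norm_eq_abs, abs_mul_abs_self]

lemma vdot_eq (a b : Fin n → ℝ) : vdot a b = inner ℝ (toE a) (toE b) := by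
  simp [vdot, toE, PiLp.inner_apply, RCLike.inner_apply, conj_trivial, mul_comm]

lemma measurable_Trep : Measurable (Trep n) := by
  apply measurable_pi_lambda
  intro i
  have h1 : Measurable fun z : AddCircle (1:ℝ) => ((AddCircle.equivIco (1:ℝ) 0) z : ℝ) :=
    continuous_subtype_val.measurable.comp (AddCircle.measurableEquivIco (1:ℝ) 0).measurable
  exact h1.comp (measurable_pi_apply i)

lemma Trep_mem_Icc (y : Torus n) : Trep n y ∈ Set.Icc (0 : Fin n → ℝ) 1 := by
  constructor <;> intro i
  · exact ((AddCircle.equivIco (1:ℝ) 0 (y i)).2).1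
  · have := ((AddCircle.equivIco (1:ℝ) 0 (y i)).2).2
    simp only [zero_add] at this
    exact le_of_lt this

lemma vgrad_continuous {φ : (Fin n → ℝ) → ℝ} (h : ContDiff ℝ 1 φ) : Continuous (vgrad φ) := by
  apply continuous_pi
  intro i
  exact (ContinuousLinearMap.apply ℝ ℝ (Pi.single i 1 : Fin n → ℝ)).continuous.comp
    (h.continuous_fderiv one_ne_zero)

lemma continuous_toE : Continuous (toE : (Fin n → ℝ) → En n) :=
  PiLp.continuous_toLp 2 (fun _ : Fin n => ℝ)

lemma vgrad_zero : vgrad (fun _ : Fin n → ℝ => (0:ℝ)) = fun _ _ => 0 := by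
  funext x i
  simp [vgrad, fderiv_fun_const]

lemma vgrad_add {φ ψ : (Fin n → ℝ) → ℝ} (hφ : ContDiff ℝ 1 φ) (hψ : ContDiff ℝ 1 ψ)
    (x : Fin n → ℝ) : vgrad (fun z => φ z + ψ z) x = vgrad φ x + vgrad ψ x := by
  funext i
  simp only [vgrad, Pi.add_apply]
  rw [fderiv_fun_add ((hφ.differentiable one_ne_zero) x) ((hψ.differentiable one_ne_zero) x)]
  simp

lemma vgrad_smul {φ : (Fin n → ℝ) → ℝ} (hφ : ContDiff ℝ 1 φ) (c : ℝ)
    (x : Fin n → ℝ) : vgrad (fun z => c * φ z) x = c • vgrad φ x := by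
  funext i
  simp only [vgrad, Pi.smul_apply]
  rw [fderiv_const_mul ((hφ.differentiable one_ne_zero) x) c]
  simp

lemma isC1_zero : IsC1Torus (fun _ : Fin n → ℝ => (0:ℝ)) :=
  ⟨contDiff_const, fun _ _ => rfl⟩

lemma isC1_add {φ ψ : (Fin n → ℝ) → ℝ} (hφ : IsC1Torus φ) (hψ : IsC1Torus ψ) :
    IsC1Torus (fun z => φ z + ψ z) :=
  ⟨hφ.1.add hψ.1, fun x z => by simp only [hφ.2 x z, hψ.2 x z]⟩

lemma isC1_smul {φ : (Fin n → ℝ) → ℝ} (hφ : IsC1Torus φ) (c : ℝ) :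
    IsC1Torus (fun z => c * φ z) :=
  ⟨contDiff_const.mul hφ.1, fun x z => by simp only [hφ.2 x z]⟩

lemma memℒp_gradRep (μ : Measure (Torus n)) [IsProbabilityMeasure μ]
    {φ : (Fin n → ℝ) → ℝ} (hφ : ContDiff ℝ 1 φ) :
    MemLp (fun y => toE (vgrad φ (Trep n y))) 2 μ := by
  have hc : Continuous fun x : Fin n → ℝ => toE (vgrad φ x) :=
    continuous_toE.comp (vgrad_continuous hφ)
  have hm : AEStronglyMeasurable (fun y => toE (vgrad φ (Trep n y))) μ :=
    (hc.measurable.comp measurable_Trep).aestronglyMeasurable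
  obtain ⟨C, hC⟩ := (isCompact_Icc (a := (0 : Fin n → ℝ)) (b := 1)).exists_bound_of_continuousOn
    hc.continuousOn
  exact MemLp.of_bound hm C (Filter.Eventually.of_forall fun y => hC _ (Trep_mem_Icc y))

section L2
variable {α : Type*} [MeasurableSpace α] {m : Measure α}

lemma inner_toLp_eq {f g : α → En n} (hf : MemLp f 2 m) (hg : MemLp g 2 m) :
    (inner ℝ (hf.toLp f) (hg.toLp g) : ℝ) = ∫ a, inner ℝ (f a) (g a) ∂m := by
  rw [MeasureTheory.L2.inner_def]
  refine integral_congr_ae ?_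
  filter_upwards [hf.coeFn_toLp, hg.coeFn_toLp] with a h1 h2
  rw [h1, h2]

lemma normSq_toLp_eq {f : α → En n} (hf : MemLp f 2 m) :
    ‖hf.toLp f‖ ^ 2 = ∫ a, ‖f a‖ ^ 2 ∂m := by
  have h := inner_toLp_eq hf hf
  rw [real_inner_self_eq_norm_sq] at h
  rw [h]
  exact integral_congr_ae (Filter.Eventually.of_forall fun a => real_inner_self_eq_norm_sq _)

lemma normSq_Lp (u : Lp (En n) 2 m) : ‖u‖ ^ 2 = ∫ a, ‖u a‖ ^ 2 ∂m := by
  have h := normSq_toLp_eq (Lp.memLp u)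
  rwa [MeasureTheory.Lp.toLp_coeFn u (Lp.memLp u)] at h

lemma integrable_inner_of_memℒp {f g : α → En n} (hf : MemLp f 2 m) (hg : MemLp g 2 m) :
    Integrable (fun a => (inner ℝ (f a) (g a) : ℝ)) m := by
  have h := MeasureTheory.L2.integrable_inner (𝕜 := ℝ) (hf.toLp f) (hg.toLp g)
  refine h.congr ?_
  filter_upwards [hf.coeFn_toLp, hg.coeFn_toLp] with a h1 h2
  rw [h1, h2]

lemma memℒp_sq_norm_iff {f : α → En n} (hm : AEStronglyMeasurable f m) :
    MemLp f 2 m ↔ Integrable (fun a => ‖f a‖ ^ 2) m := by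
  rw [memLp_two_iff_integrable_sq_norm hm]

end L2

section Marg
variable {μ : Measure (Torus n)} {ξ : Measure (Torus n × (Fin n → ℝ))}

lemma mp_fst (hm : ξ.map Prod.fst = μ) :
    MeasurePreserving (Prod.fst : Torus n × (Fin n → ℝ) → Torus n) ξ μ :=
  ⟨measurable_fst, hm⟩

lemma ae_fst (hm : ξ.map Prod.fst = μ) {p : Torus n → Prop} (h : ∀ᵐ y ∂μ, p y) :
    ∀ᵐ q ∂ξ, p q.1 := by
  rw [← hm] at h
  exact MeasureTheory.ae_of_ae_map measurable_fst.aemeasurable h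

lemma integral_fst_eq (hm : ξ.map Prod.fst = μ) {g : Torus n → ℝ}
    (hg : AEStronglyMeasurable g μ) : ∫ q, g q.1 ∂ξ = ∫ y, g y ∂μ := by
  rw [← hm]
  exact (integral_map measurable_fst.aemeasurable (by rwa [hm])).symm

lemma memℒp_snd (hI : Integrable (fun q => vnsq q.2) ξ) :
    MemLp (fun q : Torus n × (Fin n → ℝ) => toE q.2) 2 ξ := by
  have hm : AEStronglyMeasurable (fun q : Torus n × (Fin n → ℝ) => toE q.2) ξ :=
    (continuous_toE.measurable.comp measurable_snd).aestronglyMeasurable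
  rw [memℒp_sq_norm_iff hm]
  exact hI.congr (Filter.Eventually.of_forall fun q => vnsq_eq q.2)

lemma memℒp_comp_fst (hm : ξ.map Prod.fst = μ) {g : Torus n → En n} (hg : MemLp g 2 μ) :
    MemLp (fun q : Torus n × (Fin n → ℝ) => g q.1) 2 ξ :=
  hg.comp_measurePreserving (mp_fst hm)

end Marg

section Main
variable (n : ℕ) (μ : Measure (Torus n)) [IsProbabilityMeasure μ]

def gradSet : Set (Lp (En n) 2 μ) :=
  {g | ∃ φ : (Fin n → ℝ) → ℝ, ∃ _hφ : IsC1Torus φ, g = (memℒp_gradRep μ ‹IsC1Torus φ›.1).toLp _}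

def Gsub : Submodule ℝ (Lp (En n) 2 μ) :=
  (Submodule.span ℝ (gradSet n μ)).topologicalClosure

instance : CompleteSpace (Gsub n μ) :=
  Submodule.topologicalClosure.completeSpace _

lemma grad_mem {φ : (Fin n → ℝ) → ℝ} (hφ : IsC1Torus φ) :
    (memℒp_gradRep μ hφ.1).toLp _ ∈ Gsub n μ :=
  (Submodule.span ℝ (gradSet n μ)).le_topologicalClosure
    (Submodule.subset_span ⟨φ, hφ, rfl⟩)

lemma span_is_grad : ∀ u ∈ Submodule.span ℝ (gradSet n μ),
    ∃ φ : (Fin n → ℝ) → ℝ, ∃ hφ : IsC1Torus φ, u = (memℒp_gradRep μ hφ.1).toLp _ := by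
  intro u hu
  induction hu using Submodule.span_induction with
  | mem g hg => exact hg
  | zero =>
    refine ⟨fun _ => 0, isC1_zero, ?_⟩
    have h0 : (fun y => toE (vgrad (fun _ : Fin n → ℝ => (0:ℝ)) (Trep n y)))
        = (0 : Torus n → En n) := by
      funext y
      rw [vgrad_zero]
      rfl
    rw [MemLp.toLp_congr _ (MemLp.zero (ε := En n) (p := 2) (μ := μ)) (Filter.EventuallyEq.of_eq h0), MemLp.toLp_zero]
  | add u v _ _ hu hv =>
    obtain ⟨φ, hφ, rfl⟩ := hu
    obtain ⟨ψ, hψ, rfl⟩ := hv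
    refine ⟨fun z => φ z + ψ z, isC1_add hφ hψ, ?_⟩
    rw [← MemLp.toLp_add]
    refine MemLp.toLp_congr _ _ (Filter.Eventually.of_forall fun y => ?_)
    show toE (vgrad φ (Trep n y)) + toE (vgrad ψ (Trep n y))
        = toE (vgrad (fun z => φ z + ψ z) (Trep n y))
    rw [vgrad_add hφ.1 hψ.1]
    rfl
  | smul c u _ hu =>
    obtain ⟨φ, hφ, rfl⟩ := hu
    refine ⟨fun z => c * φ z, isC1_smul hφ c, ?_⟩
    rw [← MemLp.toLp_const_smul c]
    refine MemLp.toLp_congr _ _ (Filter.Eventually.of_forall fun y => ?_)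
    show c • toE (vgrad φ (Trep n y)) = toE (vgrad (fun z => c * φ z) (Trep n y))
    rw [vgrad_smul hφ.1]
    rfl

end Main

section Core
variable (n : ℕ) (μ : Measure (Torus n)) [IsProbabilityMeasure μ] (P : Fin n → ℝ)

def PcL : Lp (En n) 2 μ := (memLp_const (toE P)).toLp _

def bL : Lp (En n) 2 μ :=
  PcL n μ P - (Submodule.orthogonalProjection (Gsub n μ) (PcL n μ P) : Lp (En n) 2 μ)

lemma bL_orth : bL n μ P ∈ (Gsub n μ)ᗮ :=
  Submodule.sub_starProjection_mem_orthogonal (K := Gsub n μ) _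

lemma bL_add_proj : bL n μ P + (Submodule.orthogonalProjection (Gsub n μ) (PcL n μ P) : Lp (En n) 2 μ)
    = PcL n μ P := by
  simp [bL]

lemma inner_bL_of_mem_G {u : Lp (En n) 2 μ} (hu : u ∈ Gsub n μ) :
    (inner ℝ (bL n μ P) u : ℝ) = 0 := by
  have := (Submodule.mem_orthogonal _ _).mp (bL_orth n μ P) u hu
  rw [real_inner_comm]
  exact this

lemma inner_bL_Pc : (inner ℝ (bL n μ P) (PcL n μ P) : ℝ) = ‖bL n μ P‖ ^ 2 := by
  conv_lhs => rw [← bL_add_proj n μ P]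
  rw [inner_add_right, inner_bL_of_mem_G n μ P (SetLike.coe_mem _),
    real_inner_self_eq_norm_sq]
  ring

lemma elt_S_eq {φ : (Fin n → ℝ) → ℝ} (hφ : IsC1Torus φ) :
    ∫ y, vnsq (vgrad φ (Trep n y) + P) ∂μ
      = ‖(memℒp_gradRep μ hφ.1).toLp _ + PcL n μ P‖ ^ 2 := by
  rw [PcL, ← MemLp.toLp_add, normSq_toLp_eq]
  refine integral_congr_ae (Filter.Eventually.of_forall fun y => ?_)
  show vnsq (vgrad φ (Trep n y) + P) = ‖toE (vgrad φ (Trep n y)) + toE P‖ ^ 2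
  rw [vnsq_eq]
  rfl

lemma norm_grad_add_Pc_ge {φ : (Fin n → ℝ) → ℝ} (hφ : IsC1Torus φ) :
    ‖bL n μ P‖ ^ 2 ≤ ‖(memℒp_gradRep μ hφ.1).toLp _ + PcL n μ P‖ ^ 2 := by
  set g : Lp (En n) 2 μ := (memℒp_gradRep μ hφ.1).toLp _ with hg
  have hdec : g + PcL n μ P = bL n μ P
      + ((Submodule.orthogonalProjection (Gsub n μ) (PcL n μ P) : Lp (En n) 2 μ) + g) := by
    rw [← add_assoc, bL_add_proj, add_comm]
  have hmem : (Submodule.orthogonalProjection (Gsub n μ) (PcL n μ P) : Lp (En n) 2 μ) + g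
      ∈ Gsub n μ := Submodule.add_mem _ (SetLike.coe_mem _) (grad_mem n μ hφ)
  rw [hdec, norm_add_sq_real, inner_bL_of_mem_G n μ P hmem]
  nlinarith [sq_nonneg ‖(Submodule.orthogonalProjection (Gsub n μ) (PcL n μ P) : Lp (En n) 2 μ) + g‖,
    sq_nonneg ‖bL n μ P‖]

lemma sInf_S_eq :
    sInf { r : ℝ | ∃ φ, IsC1Torus φ ∧
      r = ∫ y, vnsq (vgrad φ (Trep n y) + P) ∂μ } = ‖bL n μ P‖ ^ 2 := by
  have hne : { r : ℝ | ∃ φ, IsC1Torus φ ∧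
      r = ∫ y, vnsq (vgrad φ (Trep n y) + P) ∂μ }.Nonempty :=
    ⟨_, (fun _ => 0), isC1_zero, rfl⟩
  have hbdd : BddBelow { r : ℝ | ∃ φ, IsC1Torus φ ∧
      r = ∫ y, vnsq (vgrad φ (Trep n y) + P) ∂μ } := by
    refine ⟨0, fun r hr => ?_⟩
    obtain ⟨φ, hφ, rfl⟩ := hr
    exact integral_nonneg fun y => by
      simpa [vnsq_eq] using sq_nonneg ‖toE (vgrad φ (Trep n y) + P)‖
  refine le_antisymm ?_ ?_
  · -- sInf ≤ ‖bL‖²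
    refine le_of_forall_pos_le_add fun ε hε => ?_
    set B : ℝ := ‖bL n μ P‖ with hB
    have hBnn : 0 ≤ B := norm_nonneg _
    set δ : ℝ := min 1 (ε / (2 * B + 2)) with hδdef
    have hδpos : 0 < δ := lt_min one_pos (by positivity)
    -- find φ with ‖gφ - (-proj)‖ < δ
    have hmemneg : -(Submodule.orthogonalProjection (Gsub n μ) (PcL n μ P) : Lp (En n) 2 μ)
        ∈ Gsub n μ := Submodule.neg_mem _ (SetLike.coe_mem _)
    have hcl : -(Submodule.orthogonalProjection (Gsub n μ) (PcL n μ P) : Lp (En n) 2 μ)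
        ∈ closure (Submodule.span ℝ (gradSet n μ) : Set (Lp (En n) 2 μ)) := hmemneg
    rw [Metric.mem_closure_iff] at hcl
    obtain ⟨s, hs, hds⟩ := hcl δ hδpos
    obtain ⟨φ, hφ, rfl⟩ := span_is_grad n μ s hs
    have key : ‖(memℒp_gradRep μ hφ.1).toLp _ + PcL n μ P‖ ≤ B + δ := by
      have h1 : (memℒp_gradRep μ hφ.1).toLp (fun y => toE (vgrad φ (Trep n y))) + PcL n μ P
          = ((memℒp_gradRep μ hφ.1).toLp _
            - (-(Submodule.orthogonalProjection (Gsub n μ) (PcL n μ P) : Lp (En n) 2 μ)))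
            + bL n μ P := by
        conv_lhs => rw [← bL_add_proj n μ P]
        abel
      rw [h1]
      refine (norm_add_le _ _).trans ?_
      have hgd : ‖(memℒp_gradRep μ hφ.1).toLp (fun y => toE (vgrad φ (Trep n y)))
          - (-(Submodule.orthogonalProjection (Gsub n μ) (PcL n μ P) : Lp (En n) 2 μ))‖ ≤ δ := by
        rw [← dist_eq_norm, dist_comm]
        exact hds.le
      have hBeq : ‖bL n μ P‖ = B := rfl
      linarith [hgd, hBeq.le]
    have hr : ∫ y, vnsq (vgrad φ (Trep n y) + P) ∂μ ≤ (B + δ) ^ 2 := by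
      rw [elt_S_eq n μ P hφ]
      have h0 : (0:ℝ) ≤ B + δ := by positivity
      nlinarith [norm_nonneg ((memℒp_gradRep μ hφ.1).toLp _ + PcL n μ P)]
    have hfin : (B + δ) ^ 2 ≤ B ^ 2 + ε := by
      have hδ1 : δ ≤ 1 := min_le_left _ _
      have hδ2 : δ ≤ ε / (2 * B + 2) := min_le_right _ _
      have h2B : (0:ℝ) < 2 * B + 2 := by positivity
      have : δ * (2 * B + 2) ≤ ε := by
        rw [← le_div_iff₀ h2B]
        exact hδ2
      nlinarith
    exact csInf_le_of_le hbdd ⟨φ, hφ, rfl⟩ (hr.trans hfin)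
  · exact le_csInf hne fun r hr => by
      obtain ⟨φ, hφ, rfl⟩ := hr
      rw [elt_S_eq n μ P hφ]
      exact norm_grad_add_Pc_ge n μ P hφ

lemma Fdir_eq : Fdir μ P = ‖bL n μ P‖ ^ 2 / 2 := by
  show (1/2) * sInf _ = _
  rw [sInf_S_eq n μ P]
  ring

end Core

section Xi
variable (n : ℕ) (μ : Measure (Torus n)) [IsProbabilityMeasure μ]
variable {ξ : Measure (Torus n × (Fin n → ℝ))}

lemma integral_inner_G_zero (hξ : MemLambdaMu μ ξ) {u : Lp (En n) 2 μ} (hu : u ∈ Gsub n μ) :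
    ∫ q, (inner ℝ (toE q.2) (u q.1) : ℝ) ∂ξ = 0 := by
  obtain ⟨⟨hprob, hI, hcon⟩, hm⟩ := hξ
  haveI := hprob
  have pm : MemLp (fun q : Torus n × (Fin n → ℝ) => toE q.2) 2 ξ := memℒp_snd hI
  set T := Lp.compMeasurePreservingₗᵢ (E := En n) (p := 2) ℝ Prod.fst (mp_fst hm) with hT
  set L : Lp (En n) 2 μ →L[ℝ] ℝ :=
    ((innerSL ℝ (pm.toLp _)).comp T.toContinuousLinearMap) with hL
  have hLval : ∀ v : Lp (En n) 2 μ, L v = ∫ q, (inner ℝ (toE q.2) (v q.1) : ℝ) ∂ξ := by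
    intro v
    have h1 : L v = (inner ℝ (pm.toLp _) (T v) : ℝ) := rfl
    rw [h1, MeasureTheory.L2.inner_def]
    refine integral_congr_ae ?_
    have h2 : (T v : Lp (En n) 2 ξ) =ᵐ[ξ] (⇑v) ∘ Prod.fst := by
      have := Lp.coeFn_compMeasurePreserving v (mp_fst (μ := μ) (ξ := ξ) hm)
      exact this
    filter_upwards [pm.coeFn_toLp, h2] with q hq1 hq2
    rw [hq1, hq2]
    rfl
  have hspan : Submodule.span ℝ (gradSet n μ) ≤ L.ker := by
    rw [Submodule.span_le]
    rintro g ⟨φ, hφ, rfl⟩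
    simp only [SetLike.mem_coe, LinearMap.mem_ker, ContinuousLinearMap.coe_coe]
    rw [hLval]
    rw [← hcon φ hφ]
    refine integral_congr_ae ?_
    filter_upwards [ae_fst hm (memℒp_gradRep μ hφ.1).coeFn_toLp] with q hq
    rw [hq, ← vdot_eq]
  have hker : Gsub n μ ≤ L.ker :=
    Submodule.topologicalClosure_minimal _ hspan (ContinuousLinearMap.isClosed_ker L)
  have := hker hu
  rw [LinearMap.mem_ker] at this
  rw [← hLval u]
  exact this

end Xi

section Sol
variable (n : ℕ) (μ : Measure (Torus n)) [IsProbabilityMeasure μ] (P : Fin n → ℝ)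

def bfun : Torus n → En n := fun y => (bL n μ P) y

lemma bfun_sm : StronglyMeasurable (bfun n μ P) := Lp.stronglyMeasurable _

def graphMap : Torus n → Torus n × (Fin n → ℝ) := fun y => (y, bfun n μ P y)

lemma graph_meas : Measurable (graphMap n μ P) := by
  refine measurable_id.prodMk ?_
  apply measurable_pi_lambda
  intro i
  have hev : Continuous (fun v : En n => (v : Fin n → ℝ) i) :=
    (continuous_apply i).comp (PiLp.continuous_ofLp 2 (fun _ : Fin n => ℝ))
  exact hev.measurable.comp (bfun_sm n μ P).measurable

def nu0 : Measure (Torus n × (Fin n → ℝ)) := μ.map (graphMap n μ P)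

lemma nu0_prob : IsProbabilityMeasure (nu0 n μ P) :=
  Measure.isProbabilityMeasure_map (graph_meas n μ P).aemeasurable

lemma nu0_marg : (nu0 n μ P).map Prod.fst = μ := by
  rw [nu0, Measure.map_map measurable_fst (graph_meas n μ P)]
  have : (Prod.fst ∘ graphMap n μ P) = id := rfl
  rw [this, Measure.map_id]

lemma vnsq_measurable : Measurable (vnsq : (Fin n → ℝ) → ℝ) := by
  show Measurable fun a : Fin n → ℝ => ∑ i, a i ^ 2
  exact Finset.measurable_sum _ fun i _ => (measurable_pi_apply i).pow_const 2

lemma nu0_intble : Integrable (fun q => vnsq q.2) (nu0 n μ P) := by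
  have hg : AEStronglyMeasurable (fun q : Torus n × (Fin n → ℝ) => vnsq q.2)
      (μ.map (graphMap n μ P)) := by
    have : Measurable fun q : Torus n × (Fin n → ℝ) => vnsq q.2 :=
      (vnsq_measurable n).comp measurable_snd
    exact this.aestronglyMeasurable
  rw [nu0]
  refine (integrable_map_measure hg (graph_meas n μ P).aemeasurable).mpr ?_
  have h1 : Integrable (fun y => ‖bfun n μ P y‖ ^ 2) μ :=
    (memℒp_sq_norm_iff (Lp.aestronglyMeasurable _)).mp (Lp.memLp _)
  refine h1.congr (Filter.Eventually.of_forall fun y => ?_)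
  show ‖bfun n μ P y‖ ^ 2 = vnsq ((bfun n μ P y : Fin n → ℝ))
  rw [vnsq_eq]
  rfl

lemma measurable_vdot_grad {θ : (Fin n → ℝ) → ℝ} (hθ : ContDiff ℝ 1 θ) :
    Measurable (fun q : Torus n × (Fin n → ℝ) => vdot q.2 (vgrad θ (Trep n q.1))) := by
  show Measurable fun q : Torus n × (Fin n → ℝ) => ∑ i, q.2 i * vgrad θ (Trep n q.1) i
  refine Finset.measurable_sum _ fun i _ => Measurable.mul ?_ ?_
  · exact (measurable_pi_apply i).comp measurable_snd
  · exact (measurable_pi_apply i).comp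
      (((vgrad_continuous hθ).measurable.comp measurable_Trep).comp measurable_fst)

lemma nu0_constraint : ∀ θ, IsC1Torus θ →
    ∫ q, vdot q.2 (vgrad θ (Trep n q.1)) ∂(nu0 n μ P) = 0 := by
  intro θ hθ
  rw [nu0, integral_map (graph_meas n μ P).aemeasurable
    (measurable_vdot_grad n hθ.1).aestronglyMeasurable]
  have h1 : ∫ y, vdot (bfun n μ P y : Fin n → ℝ) (vgrad θ (Trep n y)) ∂μ
      = ∫ y, (inner ℝ ((bL n μ P) y) (toE (vgrad θ (Trep n y))) : ℝ) ∂μ :=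
    integral_congr_ae (Filter.Eventually.of_forall fun y => vdot_eq _ _)
  show ∫ y, vdot (bfun n μ P y : Fin n → ℝ) (vgrad θ (Trep n y)) ∂μ = 0
  rw [h1]
  have h2 := inner_toLp_eq (Lp.memLp (bL n μ P)) (memℒp_gradRep μ hθ.1)
  rw [MeasureTheory.Lp.toLp_coeFn] at h2
  rw [← h2]
  exact inner_bL_of_mem_G n μ P (grad_mem n μ hθ)

lemma nu0_memLM : MemLambdaMu μ (nu0 n μ P) :=
  ⟨⟨nu0_prob n μ P, nu0_intble n μ P, nu0_constraint n μ P⟩, nu0_marg n μ P⟩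

lemma action_decomp {ξ : Measure (Torus n × (Fin n → ℝ))} (hξ : MemLambdaMu μ ξ) :
    actionInt P ξ
      = (∫ q, ‖toE q.2 - bfun n μ P q.1‖ ^ 2 ∂ξ) / 2 - ‖bL n μ P‖ ^ 2 / 2 := by
  obtain ⟨⟨hprob, hI, hcon⟩, hm⟩ := id hξ
  haveI := hprob
  have pm : MemLp (fun q : Torus n × (Fin n → ℝ) => toE q.2) 2 ξ := memℒp_snd hI
  have bcomp : MemLp (fun q : Torus n × (Fin n → ℝ) => bfun n μ P q.1) 2 ξ :=
    memℒp_comp_fst hm (Lp.memLp _)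
  have ID : Integrable (fun q => ‖toE q.2 - bfun n μ P q.1‖ ^ 2) ξ :=
    (memℒp_sq_norm_iff (pm.sub bcomp).aestronglyMeasurable).mp (pm.sub bcomp)
  have Iinner : Integrable
      (fun q => (inner ℝ (toE q.2) (bfun n μ P q.1 - toE P) : ℝ)) ξ :=
    integrable_inner_of_memℒp pm (bcomp.sub (memLp_const (toE P)))
  have Ib : Integrable (fun q => ‖bfun n μ P q.1‖ ^ 2) ξ :=
    (memℒp_sq_norm_iff bcomp.aestronglyMeasurable).mp bcomp
  have hpt : ∀ q : Torus n × (Fin n → ℝ), vnsq q.2 / 2 - vdot q.2 P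
      = ‖toE q.2 - bfun n μ P q.1‖ ^ 2 / 2
        + (inner ℝ (toE q.2) (bfun n μ P q.1 - toE P) : ℝ)
        - ‖bfun n μ P q.1‖ ^ 2 / 2 := by
    intro q
    rw [vnsq_eq, vdot_eq, @norm_sub_sq_real (En n), inner_sub_right]
    ring
  have e1 : actionInt P ξ = (∫ q, ‖toE q.2 - bfun n μ P q.1‖ ^ 2 ∂ξ) / 2
      + (∫ q, (inner ℝ (toE q.2) (bfun n μ P q.1 - toE P) : ℝ) ∂ξ)
      - (∫ q, ‖bfun n μ P q.1‖ ^ 2 ∂ξ) / 2 := by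
    show ∫ q, (vnsq q.2 / 2 - vdot q.2 P) ∂ξ = _
    rw [integral_congr_ae (Filter.Eventually.of_forall hpt)]
    have IA : Integrable (fun q => ‖toE q.2 - bfun n μ P q.1‖ ^ 2 / 2
        + (inner ℝ (toE q.2) (bfun n μ P q.1 - toE P) : ℝ)) ξ :=
      (ID.div_const 2).add Iinner
    have IA1 : Integrable (fun q => ‖toE q.2 - bfun n μ P q.1‖ ^ 2 / 2) ξ :=
      ID.div_const 2
    have IC : Integrable (fun q => ‖bfun n μ P q.1‖ ^ 2 / 2) ξ := Ib.div_const 2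
    rw [integral_sub IA IC, integral_add IA1 Iinner, integral_div, integral_div]
  have e2 : ∫ q, (inner ℝ (toE q.2) (bfun n μ P q.1 - toE P) : ℝ) ∂ξ = 0 := by
    have hmem : bL n μ P - PcL n μ P ∈ Gsub n μ := by
      have : bL n μ P - PcL n μ P
          = -(Submodule.orthogonalProjection (Gsub n μ) (PcL n μ P) : Lp (En n) 2 μ) := by
        rw [bL]; abel
      rw [this]
      exact Submodule.neg_mem _ (SetLike.coe_mem _)
    have h3 : ∫ q, (inner ℝ (toE q.2) (bfun n μ P q.1 - toE P) : ℝ) ∂ξ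
        = ∫ q, (inner ℝ (toE q.2) ((bL n μ P - PcL n μ P) q.1) : ℝ) ∂ξ := by
      refine integral_congr_ae ?_
      have hPc : ⇑(PcL n μ P) =ᵐ[μ] fun _ => toE P := MemLp.coeFn_toLp _
      filter_upwards [ae_fst hm (Lp.coeFn_sub (bL n μ P) (PcL n μ P)),
        ae_fst hm hPc] with q hq1 hq2
      rw [hq1]
      show (inner ℝ (toE q.2) (bfun n μ P q.1 - toE P) : ℝ)
        = inner ℝ (toE q.2) ((bL n μ P) q.1 - (PcL n μ P) q.1)
      rw [hq2]
      rfl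
    rw [h3]
    exact integral_inner_G_zero n μ hξ hmem
  have e3 : ∫ q, ‖bfun n μ P q.1‖ ^ 2 ∂ξ = ‖bL n μ P‖ ^ 2 := by
    rw [integral_fst_eq hm
      (((bfun_sm n μ P).measurable.norm.pow_const 2).aestronglyMeasurable)]
    exact (normSq_Lp (bL n μ P)).symm
  rw [e1, e2, e3]
  ring

lemma nu0_action : actionInt P (nu0 n μ P) = -(‖bL n μ P‖ ^ 2 / 2) := by
  rw [action_decomp n μ P (nu0_memLM n μ P)]
  have hmeas : Measurable (fun q : Torus n × (Fin n → ℝ)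
      => ‖toE q.2 - bfun n μ P q.1‖ ^ 2) := by
    refine Measurable.pow_const ?_ 2
    refine Measurable.norm ?_
    exact (continuous_toE.measurable.comp measurable_snd).sub
      ((bfun_sm n μ P).measurable.comp measurable_fst)
  have h0 : ∫ q, ‖toE q.2 - bfun n μ P q.1‖ ^ 2 ∂(nu0 n μ P) = 0 := by
    rw [nu0, integral_map (graph_meas n μ P).aemeasurable hmeas.aestronglyMeasurable]
    have : ∀ y, ‖toE ((graphMap n μ P y).2) - bfun n μ P ((graphMap n μ P y).1)‖ ^ 2
        = 0 := by
      intro y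
      show ‖bfun n μ P y - bfun n μ P y‖ ^ 2 = 0
      simp
    rw [integral_congr_ae (Filter.Eventually.of_forall this)]
    simp
  rw [h0]
  ring

lemma sol_eq {ν : Measure (Torus n × (Fin n → ℝ))} (hν : IsWeakSolution μ P ν) :
    ν = nu0 n μ P := by
  obtain ⟨hmem, hmin⟩ := hν
  have h1 := hmin (nu0 n μ P) (nu0_memLM n μ P)
  rw [nu0_action, action_decomp n μ P hmem] at h1
  have hD0 : ∫ q, ‖toE q.2 - bfun n μ P q.1‖ ^ 2 ∂ν ≤ 0 := by linarith
  obtain ⟨⟨hprob, hI, hcon⟩, hm⟩ := id hmem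
  haveI := hprob
  have pm : MemLp (fun q : Torus n × (Fin n → ℝ) => toE q.2) 2 ν := memℒp_snd hI
  have bcomp : MemLp (fun q : Torus n × (Fin n → ℝ) => bfun n μ P q.1) 2 ν :=
    memℒp_comp_fst hm (Lp.memLp _)
  have ID : Integrable (fun q => ‖toE q.2 - bfun n μ P q.1‖ ^ 2) ν :=
    (memℒp_sq_norm_iff (pm.sub bcomp).aestronglyMeasurable).mp (pm.sub bcomp)
  have hDz : ∫ q, ‖toE q.2 - bfun n μ P q.1‖ ^ 2 ∂ν = 0 :=
    le_antisymm hD0 (integral_nonneg fun q => sq_nonneg _)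
  have hae0 : (fun q : Torus n × (Fin n → ℝ) => ‖toE q.2 - bfun n μ P q.1‖ ^ 2)
      =ᵐ[ν] 0 := (integral_eq_zero_iff_of_nonneg (fun q => sq_nonneg _) ID).mp hDz
  have hae : ∀ᵐ q ∂ν, ‖toE q.2 - bfun n μ P q.1‖ ^ 2 = 0 :=
    hae0.mono fun q hq => by simpa using hq
  have hgr : ∀ᵐ q ∂ν, q = graphMap n μ P q.1 := by
    filter_upwards [hae] with q hq
    have h2 : toE q.2 - bfun n μ P q.1 = 0 := by
      have := pow_eq_zero_iff (n := 2) (by norm_num) |>.mp hq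
      exact norm_eq_zero.mp this
    have h3 : toE q.2 = bfun n μ P q.1 := sub_eq_zero.mp h2
    show q = (q.1, (bfun n μ P q.1 : Fin n → ℝ))
    exact Prod.ext rfl (by rw [← h3]; rfl)
  calc ν = ν.map id := (Measure.map_id).symm
    _ = ν.map (fun q => graphMap n μ P q.1) := Measure.map_congr hgr
    _ = (ν.map Prod.fst).map (graphMap n μ P) :=
        (Measure.map_map (graph_meas n μ P) measurable_fst).symm
    _ = nu0 n μ P := by rw [hm, nu0]

lemma nu0_sol : IsWeakSolution μ P (nu0 n μ P) := by
  refine ⟨nu0_memLM n μ P, fun ξ hξ => ?_⟩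
  rw [nu0_action, action_decomp n μ P hξ]
  have : 0 ≤ ∫ q, ‖toE q.2 - bfun n μ P q.1‖ ^ 2 ∂ξ :=
    integral_nonneg fun q => sq_nonneg _
  linarith

end Sol

end WSEU

/-- existence and uniqueness of the weak solution of `F(μ,P)`,
together with the formula `F(μ,P) = −∫ (|p|²/2 − p·P) dν`. -/
theorem weak_solution_exists_unique (n : ℕ) (hn : 1 ≤ n)
    (μ : Measure (Torus n)) (hμ : IsProbabilityMeasure μ) (P : Fin n → ℝ) :
    (∃! ν : Measure (Torus n × (Fin n → ℝ)), IsWeakSolution μ P ν) ∧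
    ∀ ν : Measure (Torus n × (Fin n → ℝ)), IsWeakSolution μ P ν →
      Fdir μ P = - actionInt P ν := by
  haveI := hμ
  constructor
  · exact ⟨WSEU.nu0 n μ P, WSEU.nu0_sol n μ P, fun ν hν => WSEU.sol_eq n μ P hν⟩
  · intro ν hν
    rw [WSEU.sol_eq n μ P hν, WSEU.nu0_action n μ P, WSEU.Fdir_eq n μ P]
    ring

end
end

section
/- Let ρ ∈ C¹(𝕋ⁿ) with ρ > 0 on 𝕋ⁿ and ∫_{𝕋ⁿ} ρ dx = 1, and let μ(dx) = ρ(x)dx. Let P ∈ ℝⁿ and suppose φ ∈ C¹(𝕋ⁿ) is a solution of the elliptic equation ∇·[ρ(∇φ + P)] = 0 on 𝕋ⁿ (in the weak sense: ∫_{𝕋ⁿ} ρ(∇φ+P)·∇θ dx = 0 for all θ ∈ C¹(𝕋ⁿ)). Then the pushforward of μ under the map x ↦ (x, ∇φ(x)+P), i.e. the measure ν(dx dp) = δ_{P+∇φ(x)}(dp) ⊗ ρ(x)dx on 𝕋ⁿ×ℝⁿ, is the unique weak solution of F(μ,P). -/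
open MeasureTheory Filter Topology

noncomputable section

section Aux

variable {n : ℕ}

lemma measurable_Trep : Measurable (Trep n) := by
  apply measurable_pi_lambda
  intro i
  have h1 : Measurable fun t : AddCircle (1:ℝ) => ((AddCircle.equivIco (1:ℝ) 0) t : ℝ) :=
    measurable_subtype_coe.comp (AddCircle.measurableEquivIco (T := (1:ℝ)) 0).measurable
  exact h1.comp (measurable_pi_apply i)

lemma Trep_mem_Icc (y : Torus n) : Trep n y ∈ Set.Icc (0 : Fin n → ℝ) 1 := by
  refine Set.mem_Icc.mpr ⟨Pi.le_def.mpr fun i => ?_, Pi.le_def.mpr fun i => ?_⟩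
  · exact ((AddCircle.equivIco (1:ℝ) 0) (y i)).2.1
  · have := ((AddCircle.equivIco (1:ℝ) 0) (y i)).2.2
    exact this.le.trans_eq (zero_add 1)

lemma exists_bound_comp (h : (Fin n → ℝ) → ℝ) (hc : Continuous h) :
    ∃ C : ℝ, ∀ y : Torus n, |h (Trep n y)| ≤ C := by
  obtain ⟨C, hC⟩ :=
    (isCompact_Icc (a := (0 : Fin n → ℝ)) (b := 1)).exists_bound_of_continuousOn
      hc.continuousOn
  exact ⟨C, fun y => by simpa [Real.norm_eq_abs] using hC _ (Trep_mem_Icc y)⟩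

lemma continuous_vgrad {φ : (Fin n → ℝ) → ℝ} (h : ContDiff ℝ 1 φ) :
    Continuous (vgrad φ) :=
  continuous_pi fun _ => (h.continuous_fderiv one_ne_zero).clm_apply continuous_const

lemma continuous_vnsq : Continuous fun a : Fin n → ℝ => vnsq a := by
  unfold vnsq
  exact continuous_finset_sum _ fun i _ => (continuous_apply i).pow 2

lemma vnsq_nonneg (a : Fin n → ℝ) : 0 ≤ vnsq a :=
  Finset.sum_nonneg fun _ _ => sq_nonneg _

lemma vnsq_eq_zero {a : Fin n → ℝ} (h : vnsq a = 0) : a = 0 := by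
  funext i
  have h2 := (Finset.sum_eq_zero_iff_of_nonneg
    (fun j _ => sq_nonneg (a j))).mp h i (Finset.mem_univ i)
  simpa using pow_eq_zero_iff (n := 2) (by norm_num) |>.mp h2

lemma vdot_sub_right (a b c : Fin n → ℝ) : vdot a (b - c) = vdot a b - vdot a c := by
  simp only [vdot, Pi.sub_apply, mul_sub]
  rw [Finset.sum_sub_distrib]

lemma vnsq_sub (a b : Fin n → ℝ) : vnsq (a - b) = vnsq a - 2 * vdot a b + vnsq b := by
  simp only [vnsq, vdot, Pi.sub_apply, Finset.mul_sum]
  rw [← Finset.sum_sub_distrib, ← Finset.sum_add_distrib]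
  exact Finset.sum_congr rfl fun i _ => by ring

lemma key_identity (p c P : Fin n → ℝ) :
    vnsq p / 2 - vdot p P = vnsq (p - c) / 2 + vdot p (c - P) - vnsq c / 2 := by
  rw [vnsq_sub, vdot_sub_right]; ring

lemma abs_vdot_le (a b : Fin n → ℝ) : |vdot a b| ≤ vnsq a + vnsq b := by
  calc |vdot a b| ≤ ∑ i, |a i * b i| := Finset.abs_sum_le_sum_abs _ _
    _ ≤ ∑ i, ((a i) ^ 2 + (b i) ^ 2) := by
        refine Finset.sum_le_sum fun i _ => ?_
        rw [abs_mul]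
        nlinarith [sq_abs (a i), sq_abs (b i), sq_nonneg (|a i| - |b i|)]
    _ = vnsq a + vnsq b := by rw [vnsq, vnsq, Finset.sum_add_distrib]

lemma measurable_vdot_snd {w : Torus n → (Fin n → ℝ)} (hw : Measurable w) :
    Measurable fun q : Torus n × (Fin n → ℝ) => vdot q.2 (w q.1) := by
  unfold vdot
  exact Finset.measurable_sum _ fun i _ =>
    ((measurable_pi_apply i).comp measurable_snd).mul
      ((measurable_pi_apply i).comp (hw.comp measurable_fst))

end Aux

/-- for a positive `C¹` density `ρ` and `φ` a weak solution of the
elliptic equation `∇·[ρ(∇φ+P)] = 0`, the push-forward of `ρ dx` under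
`x ↦ (x, ∇φ(x)+P)` is the unique weak solution of `F(μ,P)`. -/
theorem smooth_density_weak_solution (n : ℕ) (hn : 1 ≤ n)
    (ρ : (Fin n → ℝ) → ℝ) (hρC1 : ContDiff ℝ 1 ρ) (hρper : ZPeriodic ρ)
    (hρpos : ∀ x, 0 < ρ x)
    (hρint : ∫ y, ρ (Trep n y) ∂(volume : Measure (Torus n)) = 1)
    (P : Fin n → ℝ) (φ : (Fin n → ℝ) → ℝ) (hφ : IsC1Torus φ)
    (hell : ∀ θ, IsC1Torus θ →
      ∫ y, ρ (Trep n y) * vdot (vgrad φ (Trep n y) + P) (vgrad θ (Trep n y))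
        ∂(volume : Measure (Torus n)) = 0) :
    IsWeakSolution (densMeasure n ρ) P
      ((densMeasure n ρ).map (fun y => (y, vgrad φ (Trep n y) + P))) ∧
    ∀ ν' : Measure (Torus n × (Fin n → ℝ)), IsWeakSolution (densMeasure n ρ) P ν' →
      ν' = (densMeasure n ρ).map (fun y => (y, vgrad φ (Trep n y) + P)) := by
  classical
  obtain ⟨hφC1, hφper⟩ := hφ
  set μ : Measure (Torus n) := densMeasure n ρ with hμdef
  set v : Torus n → (Fin n → ℝ) := fun y => vgrad φ (Trep n y) + P with hvdef
  set ι : Torus n → Torus n × (Fin n → ℝ) := fun y => (y, v y) with hιdef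
  have hιeq : (fun y => (y, vgrad φ (Trep n y) + P)) = ι := rfl
  -- basic measurability facts
  have hTrep : Measurable (Trep n) := measurable_Trep
  have hvgradφ : Continuous (vgrad φ) := continuous_vgrad hφC1
  have hvmeas : Measurable v :=
    (hvgradφ.measurable.comp hTrep).add measurable_const
  have hιmeas : Measurable ι := measurable_id.prodMk hvmeas
  have hρTmeas : Measurable fun y : Torus n => ρ (Trep n y) :=
    hρC1.continuous.measurable.comp hTrep
  -- integrals over μ reduce to weighted integrals over volume
  have hμint : ∀ f : Torus n → ℝ,
      ∫ y, f y ∂μ = ∫ y, ρ (Trep n y) * f y ∂(volume : Measure (Torus n)) := by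
    intro f
    rw [hμdef]
    unfold densMeasure
    have h1 : (fun y : Torus n => ENNReal.ofReal (ρ (Trep n y)))
        = fun y => ((Real.toNNReal (ρ (Trep n y)) : NNReal) : ENNReal) := rfl
    rw [h1, integral_withDensity_eq_integral_smul hρTmeas.real_toNNReal]
    refine integral_congr_ae (Filter.Eventually.of_forall fun y => ?_)
    show (ρ (Trep n y)).toNNReal • f y = ρ (Trep n y) * f y
    rw [NNReal.smul_def, smul_eq_mul, Real.coe_toNNReal _ (hρpos _).le]
  -- μ is a probability measure
  have hρTint : Integrable (fun y : Torus n => ρ (Trep n y)) volume := by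
    by_contra h
    rw [integral_undef h] at hρint
    exact one_ne_zero hρint.symm
  have hμprob : IsProbabilityMeasure μ := by
    constructor
    rw [hμdef]
    unfold densMeasure
    rw [withDensity_apply _ MeasurableSet.univ, Measure.restrict_univ,
      ← ofReal_integral_eq_lintegral_ofReal hρTint
        (Filter.Eventually.of_forall fun y => (hρpos _).le), hρint]
    simp
  haveI := hμprob
  -- integrability of bounded measurable functions on μ
  have hμintg : ∀ f : Torus n → ℝ, Measurable f → (∃ C, ∀ y, |f y| ≤ C) →
      Integrable f μ := by
    rintro f hf ⟨C, hC⟩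
    exact (integrable_const C).mono' hf.aestronglyMeasurable
      (Filter.Eventually.of_forall fun y => by
        simpa [Real.norm_eq_abs] using hC y)
  -- bounds
  obtain ⟨Cv, hCv⟩ := exists_bound_comp (fun x => vnsq (vgrad φ x + P))
    (continuous_vnsq.comp (hvgradφ.add continuous_const))
  have hCv' : ∀ y, vnsq (v y) ≤ Cv := fun y => (le_abs_self _).trans (hCv y)
  -- generic integrability of the dot terms over members of Λ
  have h_dot : ∀ ξ : Measure (Torus n × (Fin n → ℝ)), IsProbabilityMeasure ξ →
      Integrable (fun q => vnsq q.2) ξ →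
      ∀ w : Torus n → (Fin n → ℝ), Measurable w → ∀ C : ℝ, (∀ y, vnsq (w y) ≤ C) →
      Integrable (fun q => vdot q.2 (w q.1)) ξ := by
    intro ξ hξprob hξ2 w hw C hC
    haveI := hξprob
    refine (hξ2.add (integrable_const C)).mono'
      (measurable_vdot_snd hw).aestronglyMeasurable
      (Filter.Eventually.of_forall fun q => ?_)
    rw [Real.norm_eq_abs]
    calc |vdot q.2 (w q.1)| ≤ vnsq q.2 + vnsq (w q.1) := abs_vdot_le _ _
      _ ≤ vnsq q.2 + C := by linarith [hC q.1]
  have hintv1 : ∀ ξ : Measure (Torus n × (Fin n → ℝ)), IsProbabilityMeasure ξ →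
      Integrable (fun q : Torus n × (Fin n → ℝ) => vnsq (v q.1)) ξ := by
    intro ξ hξprob
    haveI := hξprob
    refine (integrable_const Cv).mono'
      ((continuous_vnsq.measurable.comp hvmeas).comp measurable_fst).aestronglyMeasurable
      (Filter.Eventually.of_forall fun q => ?_)
    rw [Real.norm_eq_abs, abs_of_nonneg (vnsq_nonneg _)]
    exact hCv' q.1
  have hintsub : ∀ ξ : Measure (Torus n × (Fin n → ℝ)), IsProbabilityMeasure ξ →
      Integrable (fun q => vnsq q.2) ξ →
      Integrable (fun q : Torus n × (Fin n → ℝ) => vnsq (q.2 - v q.1)) ξ := by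
    intro ξ hξprob hξ2
    haveI := hξprob
    have heq : (fun q : Torus n × (Fin n → ℝ) => vnsq (q.2 - v q.1))
        = fun q => vnsq q.2 - 2 * vdot q.2 (v q.1) + vnsq (v q.1) :=
      funext fun q => vnsq_sub _ _
    rw [heq]
    exact (hξ2.sub ((h_dot ξ hξprob hξ2 v hvmeas Cv hCv').const_mul 2)).add
      (hintv1 ξ hξprob)
  -- decomposition of the action over any member of Λ_μ
  have hdecomp : ∀ ξ : Measure (Torus n × (Fin n → ℝ)), MemLambdaMu μ ξ →
      actionInt P ξ = (∫ q, vnsq (q.2 - v q.1) ∂ξ) / 2 - (∫ y, vnsq (v y) ∂μ) / 2 := by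
    rintro ξ ⟨⟨hξprob, hξ2, hξann⟩, hξmarg⟩
    haveI := hξprob
    have hptwise : ∀ q : Torus n × (Fin n → ℝ),
        vnsq q.2 / 2 - vdot q.2 P
          = vnsq (q.2 - v q.1) / 2 + vdot q.2 (vgrad φ (Trep n q.1))
            - vnsq (v q.1) / 2 := by
      intro q
      have hv : v q.1 - P = vgrad φ (Trep n q.1) := add_sub_cancel_right _ _
      rw [key_identity q.2 (v q.1) P, hv]
    have hIA : Integrable
        (fun q : Torus n × (Fin n → ℝ) => vnsq (q.2 - v q.1) / 2) ξ :=
      (hintsub ξ hξprob hξ2).div_const 2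
    have hIB : Integrable
        (fun q : Torus n × (Fin n → ℝ) => vdot q.2 (vgrad φ (Trep n q.1))) ξ := by
      obtain ⟨Cg, hCg⟩ := exists_bound_comp (fun x => vnsq (vgrad φ x))
        (continuous_vnsq.comp hvgradφ)
      exact h_dot ξ hξprob hξ2 (fun y => vgrad φ (Trep n y))
        (hvgradφ.measurable.comp hTrep) Cg
        (fun y => (le_abs_self _).trans (hCg y))
    have hIC : Integrable
        (fun q : Torus n × (Fin n → ℝ) => vnsq (v q.1) / 2) ξ :=
      (hintv1 ξ hξprob).div_const 2
    have h1 : actionInt P ξ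
        = ∫ q, (vnsq (q.2 - v q.1) / 2 + vdot q.2 (vgrad φ (Trep n q.1))
            - vnsq (v q.1) / 2) ∂ξ := by
      unfold actionInt
      exact integral_congr_ae (Filter.Eventually.of_forall hptwise)
    have hIAB : Integrable (fun q : Torus n × (Fin n → ℝ) =>
        vnsq (q.2 - v q.1) / 2 + vdot q.2 (vgrad φ (Trep n q.1))) ξ := hIA.add hIB
    have hs : ∫ q, (vnsq (q.2 - v q.1) / 2 + vdot q.2 (vgrad φ (Trep n q.1))
          - vnsq (v q.1) / 2) ∂ξ
        = ∫ q, (vnsq (q.2 - v q.1) / 2 + vdot q.2 (vgrad φ (Trep n q.1))) ∂ξ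
          - ∫ q, vnsq (v q.1) / 2 ∂ξ := integral_sub hIAB hIC
    have ha : ∫ q, (vnsq (q.2 - v q.1) / 2 + vdot q.2 (vgrad φ (Trep n q.1))) ∂ξ
        = ∫ q, vnsq (q.2 - v q.1) / 2 ∂ξ
          + ∫ q, vdot q.2 (vgrad φ (Trep n q.1)) ∂ξ := integral_add hIA hIB
    rw [h1, hs, ha, hξann φ ⟨hφC1, hφper⟩, integral_div, integral_div]
    have hmarg : ∫ q, vnsq (v q.1) ∂ξ = ∫ y, vnsq (v y) ∂μ := by
      have hgm : AEStronglyMeasurable (fun y : Torus n => vnsq (v y)) (ξ.map Prod.fst) :=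
        (continuous_vnsq.measurable.comp hvmeas).aestronglyMeasurable
      rw [← hξmarg]
      exact (integral_map measurable_fst.aemeasurable hgm).symm
    rw [hmarg]
    ring
  -- ν := μ.map ι belongs to Λ_μ
  have hpush : ∀ f : Torus n × (Fin n → ℝ) → ℝ, Measurable f →
      ∫ q, f q ∂(μ.map ι) = ∫ y, f (ι y) ∂μ := fun f hf =>
    integral_map hιmeas.aemeasurable hf.aestronglyMeasurable
  have hsubmeas : Measurable fun q : Torus n × (Fin n → ℝ) => vnsq (q.2 - v q.1) :=
    continuous_vnsq.measurable.comp (measurable_snd.sub (hvmeas.comp measurable_fst))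
  have hνprob : IsProbabilityMeasure (μ.map ι) :=
    Measure.isProbabilityMeasure_map hιmeas.aemeasurable
  have hνint2 : Integrable (fun q : Torus n × (Fin n → ℝ) => vnsq q.2) (μ.map ι) := by
    refine (integrable_map_measure
      (continuous_vnsq.measurable.comp measurable_snd).aestronglyMeasurable
      hιmeas.aemeasurable).mpr ?_
    show Integrable (fun y : Torus n => vnsq (v y)) μ
    exact hμintg _ (continuous_vnsq.measurable.comp hvmeas)
      ⟨Cv, fun y => by rw [abs_of_nonneg (vnsq_nonneg _)]; exact hCv' y⟩
  have hνann : ∀ θ, IsC1Torus θ →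
      ∫ q, vdot q.2 (vgrad θ (Trep n q.1)) ∂(μ.map ι) = 0 := by
    intro θ hθ
    rw [hpush (fun q => vdot q.2 (vgrad θ (Trep n q.1)))
      (measurable_vdot_snd ((continuous_vgrad hθ.1).measurable.comp hTrep))]
    have h2 : (fun y => vdot (v y) (vgrad θ (Trep n y)))
        = fun y => vdot (vgrad φ (Trep n y) + P) (vgrad θ (Trep n y)) := rfl
    calc ∫ y, vdot ((ι y).2) (vgrad θ (Trep n (ι y).1)) ∂μ
        = ∫ y, ρ (Trep n y) * vdot (vgrad φ (Trep n y) + P) (vgrad θ (Trep n y))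
            ∂(volume : Measure (Torus n)) := hμint _
      _ = 0 := hell θ hθ
  have hνmarg : (μ.map ι).map Prod.fst = μ := by
    rw [Measure.map_map measurable_fst hιmeas]
    exact Measure.map_id
  have hνmem : MemLambdaMu μ (μ.map ι) := ⟨⟨hνprob, hνint2, hνann⟩, hνmarg⟩
  -- the first term of the decomposition vanishes for ν
  have hν0 : ∫ q, vnsq (q.2 - v q.1) ∂(μ.map ι) = 0 := by
    rw [hpush _ hsubmeas]
    simp [vnsq, hιdef]
  have hνval : actionInt P (μ.map ι) = -(∫ y, vnsq (v y) ∂μ) / 2 := by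
    rw [hdecomp _ hνmem, hν0]
    ring
  have hmin : ∀ ξ, MemLambdaMu μ ξ → actionInt P (μ.map ι) ≤ actionInt P ξ := by
    intro ξ hξ
    rw [hνval, hdecomp ξ hξ]
    have h2 : 0 ≤ ∫ q, vnsq (q.2 - v q.1) ∂ξ :=
      integral_nonneg fun q => vnsq_nonneg _
    linarith
  refine ⟨⟨hνmem, hmin⟩, ?_⟩
  -- uniqueness
  rintro ν' ⟨hν'mem, hν'min⟩
  have heq : actionInt P ν' = actionInt P (μ.map ι) :=
    le_antisymm (hν'min _ hνmem) (hmin _ hν'mem)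
  have h0 : ∫ q, vnsq (q.2 - v q.1) ∂ν' = 0 := by
    have h1 := hdecomp ν' hν'mem
    have h2 := hdecomp _ hνmem
    rw [heq, h2, hν0] at h1
    linarith
  have hae : ∀ᵐ q ∂ν', vnsq (q.2 - v q.1) = 0 :=
    (integral_eq_zero_iff_of_nonneg (fun q => vnsq_nonneg _)
      (hintsub ν' hν'mem.1.1 hν'mem.1.2.1)).mp h0
  have hae2 : (fun q : Torus n × (Fin n → ℝ) => q)
      =ᵐ[ν'] fun q => (q.1, v q.1) := by
    filter_upwards [hae] with q hq
    have h3 : q.2 - v q.1 = 0 := vnsq_eq_zero hq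
    have h4 : q.2 = v q.1 := sub_eq_zero.mp h3
    exact Prod.ext rfl h4
  calc ν' = ν'.map (fun q => q) := Measure.map_id.symm
    _ = ν'.map (fun q => (q.1, v q.1)) := Measure.map_congr hae2
    _ = (ν'.map Prod.fst).map ι := (Measure.map_map hιmeas measurable_fst).symm
    _ = μ.map ι := by rw [hν'mem.2]

end
end

section
/- For every Ξ ∈ C(𝕋ⁿ) and every P ∈ ℝⁿ there exists μ₀ ∈ M̄ attaining the supremum defining Ĥ_Ξ(P), i.e. Ĥ_Ξ(P) = ∫ Ξ dμ₀ + F(μ₀,P). Moreover there exists J ∈ ℝⁿ belonging to the subgradient ∂_P F(μ₀,·) at P such that J also belongs to the subgradient ∂_P Ĥ_Ξ at P, and μ₀ attains the supremum defining Ĥ*_Ξ(J), i.e. Ĥ*_Ξ(J) = ∫ Ξ dμ₀ − F*(μ₀,J). -/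
open MeasureTheory Filter Topology

noncomputable section

namespace HXiAux
open Set

variable {n : ℕ}

lemma trep_mem (y : Torus n) (i : Fin n) : Trep n y i ∈ Ico (0:ℝ) 1 := by
  have := ((AddCircle.equivIco (1:ℝ) 0) (y i)).2
  simpa [Trep] using this

lemma trep_measurable : Measurable (Trep n) := by
  apply measurable_pi_lambda
  intro i
  have h2 : Measurable fun c : AddCircle (1:ℝ) => ((AddCircle.equivIco (1:ℝ) 0) c : ℝ) :=
    measurable_subtype_coe.comp (AddCircle.measurableEquivIco (1:ℝ) 0).measurable
  exact h2.comp (measurable_pi_apply i)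

lemma tproj_continuous : Continuous (Tproj n) := by
  apply continuous_pi
  intro i
  exact continuous_quotient_mk'.comp (continuous_apply i)

lemma tproj_trep (y : Torus n) : Tproj n (Trep n y) = y := by
  funext i
  exact (AddCircle.equivIco (1:ℝ) 0).symm_apply_apply (y i)

lemma zperiodic_trep_tproj {G : (Fin n → ℝ) → ℝ} (hG : ZPeriodic G) (x : Fin n → ℝ) :
    G (Trep n (Tproj n x)) = G x := by
  have h : Trep n (Tproj n x) = x + fun i => ((-⌊x i⌋ : ℤ) : ℝ) := by
    funext i
    show ((AddCircle.equivIco (1:ℝ) 0) ((x i : ℝ) : AddCircle (1:ℝ)) : ℝ) = _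
    rw [AddCircle.coe_equivIco_mk_apply]
    simp only [div_one, mul_one, Int.fract, Pi.add_apply]
    push_cast
    ring
  rw [h, hG x _]

lemma vnsq_nonneg (a : Fin n → ℝ) : 0 ≤ vnsq a :=
  Finset.sum_nonneg fun i _ => sq_nonneg (a i)

lemma continuous_vnsq : Continuous (vnsq (n := n)) := by
  apply continuous_finset_sum
  intro i _
  exact (continuous_apply i).pow 2

lemma vnsq_convex (x y : Fin n → ℝ) {a b : ℝ} (ha : 0 ≤ a) (hb : 0 ≤ b) (hab : a + b = 1) :
    vnsq (a • x + b • y) ≤ a * vnsq x + b * vnsq y := by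
  unfold vnsq
  rw [Finset.mul_sum, Finset.mul_sum, ← Finset.sum_add_distrib]
  apply Finset.sum_le_sum
  intro i _
  simp only [Pi.add_apply, Pi.smul_apply, smul_eq_mul]
  nlinarith [mul_nonneg (mul_nonneg ha hb) (sq_nonneg (x i - y i)), sq_nonneg (x i - y i)]

lemma unif_small {G : (Fin n → ℝ) → ℝ} (hG : Continuous G) {ε : ℝ} (hε : 0 < ε) :
    ∃ δ : ℝ, 0 < δ ∧ ∀ x y : Fin n → ℝ, x ∈ Icc (0:Fin n → ℝ) 1 → y ∈ Icc (0:Fin n → ℝ) 1 →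
      (∀ i, |x i - y i| ≤ δ) → |G x - G y| ≤ ε := by
  have hc : IsCompact (Icc (0:Fin n → ℝ) 1) := isCompact_Icc
  have huc : UniformContinuousOn G (Icc (0:Fin n → ℝ) 1) :=
    hc.uniformContinuousOn_of_continuous hG.continuousOn
  rw [Metric.uniformContinuousOn_iff] at huc
  obtain ⟨δ, hδ, h⟩ := huc ε hε
  refine ⟨δ/2, by linarith, fun x y hx hy hxy => ?_⟩
  by_cases hn0 : n = 0
  · subst hn0
    have hxy2 : x = y := funext fun i => i.elim0
    rw [hxy2]
    simpa using le_of_lt hε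
  · have hdist : dist x y < δ := by
      have : dist x y ≤ δ/2 := by
        rw [dist_pi_le_iff (by linarith)]
        intro i
        rw [Real.dist_eq]
        exact hxy i
      linarith
    have := h x hx y hy hdist
    rw [Real.dist_eq] at this
    exact le_of_lt this

end HXiAux
namespace HXiAux
open Set

variable {n : ℕ}

lemma vgrad_continuous {φ : (Fin n → ℝ) → ℝ} (hφ : ContDiff ℝ 1 φ) :
    Continuous (vgrad φ) := by
  apply continuous_pi
  intro i
  exact (hφ.continuous_fderiv one_ne_zero).clm_apply continuous_const

lemma vgrad_periodic {φ : (Fin n → ℝ) → ℝ} (hd : ContDiff ℝ 1 φ) (hφ : ZPeriodic φ)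
    (x : Fin n → ℝ) (z : Fin n → ℤ) : vgrad φ (x + fun i => (z i : ℝ)) = vgrad φ x := by
  set c : Fin n → ℝ := fun i => (z i : ℝ) with hc
  have hcomp : φ = fun w => φ (w + c) := by
    funext w; rw [hφ w z]
  have htr : HasFDerivAt (fun w : Fin n → ℝ => w + c)
      (ContinuousLinearMap.id ℝ (Fin n → ℝ)) x := (hasFDerivAt_id x).add_const c
  have hD : HasFDerivAt φ (fderiv ℝ φ (x + c)) (x + c) :=
    ((hd.differentiable one_ne_zero) (x + c)).hasFDerivAt
  have hcompd : HasFDerivAt (fun w => φ (w + c))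
      ((fderiv ℝ φ (x + c)).comp (ContinuousLinearMap.id ℝ (Fin n → ℝ))) x :=
    hD.comp x htr
  have h2 : fderiv ℝ (fun w => φ (w + c)) x = fderiv ℝ φ (x + c) := by
    rw [hcompd.fderiv]; ext v; simp
  funext i
  unfold vgrad
  conv_rhs => rw [hcomp]
  rw [h2]

/-- Bounded measurable: `W ∘ Trep` for continuous `W`. -/
lemma trep_comp_bound {W : (Fin n → ℝ) → ℝ} (hW : Continuous W) :
    ∃ C : ℝ, ∀ y : Torus n, |W (Trep n y)| ≤ C := by
  obtain ⟨C, hC⟩ := (isCompact_Icc (a := (0:Fin n → ℝ)) (b := 1)).exists_bound_of_continuousOn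
    hW.continuousOn
  refine ⟨C, fun y => ?_⟩
  have hmem : Trep n y ∈ Icc (0:Fin n → ℝ) 1 := by
    constructor <;> intro i <;> have := trep_mem y i
    · exact this.1
    · exact le_of_lt this.2
  simpa [Real.norm_eq_abs] using hC _ hmem

lemma trep_comp_integrable {W : (Fin n → ℝ) → ℝ} (hW : Continuous W)
    (μ : Measure (Torus n)) [IsFiniteMeasure μ] :
    Integrable (fun y => W (Trep n y)) μ := by
  obtain ⟨C, hC⟩ := trep_comp_bound (n := n) hW
  exact (integrable_const C).mono'
    ((hW.measurable.comp trep_measurable).aestronglyMeasurable)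
    (MeasureTheory.ae_of_all μ fun y => by simpa [Real.norm_eq_abs] using hC y)

/-- The set of values defining `Fdir`. -/
def Fset (μ : Measure (Torus n)) (P : Fin n → ℝ) : Set ℝ :=
  { r : ℝ | ∃ φ, IsC1Torus φ ∧ r = ∫ y, vnsq (vgrad φ (Trep n y) + P) ∂μ }

lemma Fdir_eq (μ : Measure (Torus n)) (P : Fin n → ℝ) :
    Fdir μ P = (1/2) * sInf (Fset μ P) := rfl

lemma integrand_continuous {φ : (Fin n → ℝ) → ℝ} (hφ : ContDiff ℝ 1 φ) (P : Fin n → ℝ) :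
    Continuous (fun x => vnsq (vgrad φ x + P)) :=
  continuous_vnsq.comp ((vgrad_continuous hφ).add continuous_const)

lemma zero_c1torus : IsC1Torus (fun _ : Fin n → ℝ => (0:ℝ)) :=
  ⟨contDiff_const, fun _ _ => rfl⟩

lemma vgrad_zero : vgrad (fun _ : Fin n → ℝ => (0:ℝ)) = fun _ => 0 := by
  funext x i
  unfold vgrad
  rw [fderiv_fun_const]
  simp

lemma vnsqP_mem_Fset (μ : Measure (Torus n)) [IsProbabilityMeasure μ] (P : Fin n → ℝ) :
    vnsq P ∈ Fset μ P := by
  refine ⟨_, zero_c1torus, ?_⟩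
  rw [vgrad_zero]
  simp

lemma Fset_nonempty (μ : Measure (Torus n)) [IsProbabilityMeasure μ] (P : Fin n → ℝ) :
    (Fset μ P).Nonempty := ⟨_, vnsqP_mem_Fset μ P⟩

lemma Fset_nonneg (μ : Measure (Torus n)) (P : Fin n → ℝ) :
    ∀ r ∈ Fset μ P, (0:ℝ) ≤ r := by
  rintro r ⟨φ, hφ, rfl⟩
  exact MeasureTheory.integral_nonneg fun y => vnsq_nonneg _

lemma Fset_bddBelow (μ : Measure (Torus n)) (P : Fin n → ℝ) : BddBelow (Fset μ P) :=
  ⟨0, fun r hr => Fset_nonneg μ P r hr⟩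

lemma Fdir_nonneg (μ : Measure (Torus n)) [IsProbabilityMeasure μ] (P : Fin n → ℝ) :
    0 ≤ Fdir μ P := by
  rw [Fdir_eq]
  have := le_csInf (Fset_nonempty μ P) (Fset_nonneg μ P)
  linarith

lemma Fdir_le_half_vnsq (μ : Measure (Torus n)) [IsProbabilityMeasure μ] (P : Fin n → ℝ) :
    Fdir μ P ≤ vnsq P / 2 := by
  rw [Fdir_eq]
  have := csInf_le (Fset_bddBelow μ P) (vnsqP_mem_Fset μ P)
  linarith

lemma Fdir_le_of_mem (μ : Measure (Torus n)) (P : Fin n → ℝ) {r : ℝ} (hr : r ∈ Fset μ P) :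
    Fdir μ P ≤ (1/2) * r := by
  rw [Fdir_eq]
  have := csInf_le (Fset_bddBelow μ P) hr
  linarith

end HXiAux
namespace HXiAux
open Set

variable {n : ℕ}

lemma single_eq_smul (i : Fin n) (c : ℝ) : (Pi.single i c : Fin n → ℝ) = c • (Pi.single i 1 : Fin n → ℝ) := by
  funext j
  rcases eq_or_ne j i with h | h
  · subst h; simp
  · simp [Pi.single_apply, h]

lemma c1torus_combo {φ1 φ2 : (Fin n → ℝ) → ℝ} (h1 : IsC1Torus φ1) (h2 : IsC1Torus φ2)
    (a b : ℝ) : IsC1Torus (fun x => a • φ1 x + b • φ2 x) := by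
  constructor
  · exact (h1.1.const_smul a).add (h2.1.const_smul b)
  · intro x z
    simp only [h1.2 x z, h2.2 x z]

lemma vgrad_combo {φ1 φ2 : (Fin n → ℝ) → ℝ} (h1 : ContDiff ℝ 1 φ1) (h2 : ContDiff ℝ 1 φ2)
    (a b : ℝ) (x : Fin n → ℝ) :
    vgrad (fun w => a • φ1 w + b • φ2 w) x = a • vgrad φ1 x + b • vgrad φ2 x := by
  funext i
  have d1 := (h1.differentiable one_ne_zero) x
  have d2 := (h2.differentiable one_ne_zero) x
  unfold vgrad
  rw [fderiv_fun_add (f := fun w => a • φ1 w) (g := fun w => b • φ2 w) (d1.const_smul a) (d2.const_smul b), fderiv_fun_const_smul d1, fderiv_fun_const_smul d2]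
  simp

lemma Fdir_convex (μ : Measure (Torus n)) [IsProbabilityMeasure μ]
    (P1 P2 : Fin n → ℝ) (a b : ℝ) (ha : 0 ≤ a) (hb : 0 ≤ b) (hab : a + b = 1) :
    Fdir μ (a • P1 + b • P2) ≤ a * Fdir μ P1 + b * Fdir μ P2 := by
  apply le_of_forall_pos_le_add
  intro ε hε
  obtain ⟨r1, hr1mem, hr1⟩ := exists_lt_of_csInf_lt (Fset_nonempty μ P1)
    (show sInf (Fset μ P1) < sInf (Fset μ P1) + ε by linarith)
  obtain ⟨r2, hr2mem, hr2⟩ := exists_lt_of_csInf_lt (Fset_nonempty μ P2)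
    (show sInf (Fset μ P2) < sInf (Fset μ P2) + ε by linarith)
  obtain ⟨φ1, hφ1, rfl⟩ := hr1mem
  obtain ⟨φ2, hφ2, rfl⟩ := hr2mem
  set φ : (Fin n → ℝ) → ℝ := fun x => a • φ1 x + b • φ2 x with hφdef
  have hφ : IsC1Torus φ := c1torus_combo hφ1 hφ2 a b
  have hmem : (∫ y, vnsq (vgrad φ (Trep n y) + (a • P1 + b • P2)) ∂μ)
      ∈ Fset μ (a • P1 + b • P2) := ⟨φ, hφ, rfl⟩
  have hptwise : ∀ y : Torus n, vnsq (vgrad φ (Trep n y) + (a • P1 + b • P2)) ≤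
      a * vnsq (vgrad φ1 (Trep n y) + P1) + b * vnsq (vgrad φ2 (Trep n y) + P2) := by
    intro y
    have hcx := vnsq_convex (vgrad φ1 (Trep n y) + P1) (vgrad φ2 (Trep n y) + P2) ha hb hab
    have heq : vgrad φ (Trep n y) + (a • P1 + b • P2) =
        a • (vgrad φ1 (Trep n y) + P1) + b • (vgrad φ2 (Trep n y) + P2) := by
      rw [hφdef, vgrad_combo hφ1.1 hφ2.1]
      funext i
      simp only [Pi.add_apply, Pi.smul_apply, smul_eq_mul]
      ring
    rw [heq]
    exact hcx
  have hint1 : Integrable (fun y => vnsq (vgrad φ (Trep n y) + (a • P1 + b • P2))) μ :=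
    trep_comp_integrable (integrand_continuous hφ.1 _) μ
  have hint2 : Integrable (fun y => a * vnsq (vgrad φ1 (Trep n y) + P1)
      + b * vnsq (vgrad φ2 (Trep n y) + P2)) μ :=
    (((trep_comp_integrable (integrand_continuous hφ1.1 P1) μ).const_mul a).add
      ((trep_comp_integrable (integrand_continuous hφ2.1 P2) μ).const_mul b))
  have hIle : (∫ y, vnsq (vgrad φ (Trep n y) + (a • P1 + b • P2)) ∂μ) ≤
      a * (∫ y, vnsq (vgrad φ1 (Trep n y) + P1) ∂μ)
      + b * (∫ y, vnsq (vgrad φ2 (Trep n y) + P2) ∂μ) := by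
    calc (∫ y, vnsq (vgrad φ (Trep n y) + (a • P1 + b • P2)) ∂μ)
        ≤ ∫ y, (a * vnsq (vgrad φ1 (Trep n y) + P1)
            + b * vnsq (vgrad φ2 (Trep n y) + P2)) ∂μ :=
          MeasureTheory.integral_mono hint1 hint2 hptwise
      _ = a * (∫ y, vnsq (vgrad φ1 (Trep n y) + P1) ∂μ)
          + b * (∫ y, vnsq (vgrad φ2 (Trep n y) + P2) ∂μ) := by
          rw [MeasureTheory.integral_add
            ((trep_comp_integrable (integrand_continuous hφ1.1 P1) μ).const_mul a)
            ((trep_comp_integrable (integrand_continuous hφ2.1 P2) μ).const_mul b),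
            MeasureTheory.integral_const_mul, MeasureTheory.integral_const_mul]
  have h1 := Fdir_le_of_mem μ (a • P1 + b • P2) hmem
  have e1 : Fdir μ P1 = (1/2) * sInf (Fset μ P1) := Fdir_eq μ P1
  have e2 : Fdir μ P2 = (1/2) * sInf (Fset μ P2) := Fdir_eq μ P2
  have ha1 : a * (∫ y, vnsq (vgrad φ1 (Trep n y) + P1) ∂μ) ≤ a * (sInf (Fset μ P1) + ε) :=
    mul_le_mul_of_nonneg_left (le_of_lt hr1) ha
  have hb1 : b * (∫ y, vnsq (vgrad φ2 (Trep n y) + P2) ∂μ) ≤ b * (sInf (Fset μ P2) + ε) :=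
    mul_le_mul_of_nonneg_left (le_of_lt hr2) hb
  nlinarith [mul_nonneg ha hε.le, mul_nonneg hb hε.le]

/-- Expansion of the Dirichlet integrand as a polynomial in `P`. -/
lemma q_expand (μ : Measure (Torus n)) [IsProbabilityMeasure μ]
    {φ : (Fin n → ℝ) → ℝ} (hφ : ContDiff ℝ 1 φ) (P : Fin n → ℝ) :
    (∫ y, vnsq (vgrad φ (Trep n y) + P) ∂μ) =
      (∫ y, vnsq (vgrad φ (Trep n y)) ∂μ)
      + (∑ i, P i * (2 * ∫ y, vgrad φ (Trep n y) i ∂μ)) + vnsq P := by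
  have hpt : ∀ y : Torus n, vnsq (vgrad φ (Trep n y) + P) =
      vnsq (vgrad φ (Trep n y)) + ((∑ i, P i * (2 * vgrad φ (Trep n y) i)) + vnsq P) := by
    intro y
    unfold vnsq
    rw [← Finset.sum_add_distrib, ← Finset.sum_add_distrib]
    apply Finset.sum_congr rfl
    intro i _
    simp only [Pi.add_apply]
    ring
  rw [MeasureTheory.integral_congr_ae (Filter.Eventually.of_forall hpt)]
  have hintg : Integrable (fun y => vnsq (vgrad φ (Trep n y))) μ :=
    trep_comp_integrable (continuous_vnsq.comp (vgrad_continuous hφ)) μ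
  have hintc : ∀ i : Fin n, Integrable (fun y => vgrad φ (Trep n y) i) μ :=
    fun i => trep_comp_integrable ((continuous_apply i).comp (vgrad_continuous hφ)) μ
  have hintl : Integrable (fun y => (∑ i, P i * (2 * vgrad φ (Trep n y) i))) μ := by
    apply MeasureTheory.integrable_finset_sum
    intro i _
    exact ((hintc i).const_mul 2).const_mul (P i)
  have I1 : Integrable (fun y => (∑ i, P i * (2 * vgrad φ (Trep n y) i)) + vnsq P) μ :=
    hintl.add (integrable_const _)
  rw [MeasureTheory.integral_add hintg I1, MeasureTheory.integral_add hintl (integrable_const _)]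
  have : (∫ y, (∑ i, P i * (2 * vgrad φ (Trep n y) i)) ∂μ)
      = ∑ i, P i * (2 * ∫ y, vgrad φ (Trep n y) i ∂μ) := by
    rw [MeasureTheory.integral_finset_sum _ (fun i _ => ((hintc i).const_mul 2).const_mul (P i))]
    apply Finset.sum_congr rfl
    intro i _
    rw [MeasureTheory.integral_const_mul, MeasureTheory.integral_const_mul]
  rw [this]
  simp [add_assoc]

lemma q_continuous (μ : Measure (Torus n)) [IsProbabilityMeasure μ]
    {φ : (Fin n → ℝ) → ℝ} (hφ : ContDiff ℝ 1 φ) :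
    Continuous (fun P : Fin n → ℝ => ∫ y, vnsq (vgrad φ (Trep n y) + P) ∂μ) := by
  have : (fun P : Fin n → ℝ => ∫ y, vnsq (vgrad φ (Trep n y) + P) ∂μ) =
      fun P => (∫ y, vnsq (vgrad φ (Trep n y)) ∂μ)
      + (∑ i, P i * (2 * ∫ y, vgrad φ (Trep n y) i ∂μ)) + vnsq P := by
    funext P
    exact q_expand μ hφ P
  rw [this]
  apply Continuous.add
  apply Continuous.add continuous_const
  · apply continuous_finset_sum
    intro i _
    exact (continuous_apply i).mul continuous_const
  · exact continuous_vnsq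

lemma Fdir_epi_open (μ : Measure (Torus n)) [IsProbabilityMeasure μ] :
    IsOpen {p : (Fin n → ℝ) × ℝ | Fdir μ p.1 < p.2} := by
  have hset : {p : (Fin n → ℝ) × ℝ | Fdir μ p.1 < p.2} =
      ⋃ φ ∈ {ψ : (Fin n → ℝ) → ℝ | IsC1Torus ψ},
        {p : (Fin n → ℝ) × ℝ | (1/2) * (∫ y, vnsq (vgrad φ (Trep n y) + p.1) ∂μ) < p.2} := by
    ext p
    simp only [mem_setOf_eq, mem_iUnion, exists_prop]
    constructor
    · intro h
      rw [Fdir_eq] at h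
      have h2 : sInf (Fset μ p.1) < 2 * p.2 := by linarith
      obtain ⟨r, hrmem, hr⟩ := exists_lt_of_csInf_lt (Fset_nonempty μ p.1) h2
      obtain ⟨φ, hφ, rfl⟩ := hrmem
      exact ⟨φ, hφ, by linarith⟩
    · rintro ⟨φ, hφ, hlt⟩
      calc Fdir μ p.1 ≤ (1/2) * (∫ y, vnsq (vgrad φ (Trep n y) + p.1) ∂μ) :=
            Fdir_le_of_mem μ p.1 ⟨φ, hφ, rfl⟩
        _ < p.2 := hlt
  rw [hset]
  apply isOpen_biUnion
  intro φ hφ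
  exact isOpen_lt (by
    exact (continuous_const.mul ((q_continuous μ hφ.1).comp continuous_fst))) continuous_snd

end HXiAux
namespace HXiAux
open Set

variable {n : ℕ}

/-- Existence of a subgradient for a convex function with open strict epigraph. -/
lemma exists_subgrad {f : (Fin n → ℝ) → ℝ}
    (hconv : ∀ x y a b, 0 ≤ a → 0 ≤ b → a + b = 1 → f (a•x + b•y) ≤ a * f x + b * f y)
    (hopen : IsOpen {p : (Fin n → ℝ) × ℝ | f p.1 < p.2}) (P : Fin n → ℝ) :
    ∃ J : Fin n → ℝ, ∀ x, f P + vdot J (x - P) ≤ f x := by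
  set S : Set ((Fin n → ℝ) × ℝ) := {p | f p.1 < p.2} with hS
  have hSconv : Convex ℝ S := by
    rintro p hp q hq a b ha hb hab
    rcases eq_or_lt_of_le ha with h0 | hapos
    · have hb1 : b = 1 := by linarith
      simp only [← h0, hb1, zero_smul, one_smul, zero_add]
      exact hq
    · have h1 : f (a • p.1 + b • q.1) ≤ a * f p.1 + b * f q.1 :=
        hconv p.1 q.1 a b ha hb hab
      have h2 : a * f p.1 + b * f q.1 < a * p.2 + b * q.2 := by
        have hl : a * f p.1 < a * p.2 := (mul_lt_mul_iff_right₀ hapos).mpr hp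
        have hr : b * f q.1 ≤ b * q.2 := mul_le_mul_of_nonneg_left (le_of_lt hq) hb
        linarith
      show f (a • p + b • q).1 < (a • p + b • q).2
      simp only [Prod.fst_add, Prod.snd_add, Prod.smul_fst, Prod.smul_snd, smul_eq_mul]
      exact lt_of_le_of_lt h1 h2
  have hdisj : Disjoint S {((P : Fin n → ℝ), f P)} := by
    rw [Set.disjoint_singleton_right]
    simp [hS]
  obtain ⟨ℓ, u, h1, h2⟩ := geometric_hahn_banach_open hSconv hopen
    (convex_singleton ((P : Fin n → ℝ), f P)) hdisj
  have h2' : u ≤ ℓ (P, f P) := h2 _ rfl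
  set β : ℝ := ℓ (0, 1) with hβdef
  set L : (Fin n → ℝ) → ℝ := fun x => ℓ (x, 0) with hLdef
  have hlin : ∀ (x : Fin n → ℝ) (t : ℝ), ℓ (x, t) = L x + t * β := by
    intro x t
    have : ((x, t) : (Fin n → ℝ) × ℝ) = (x, 0) + t • ((0 : Fin n → ℝ), (1:ℝ)) := by
      simp [Prod.ext_iff]
    rw [this, map_add, ℓ.map_smul]
    simp [hLdef, hβdef]
  have hmem : ∀ (x : Fin n → ℝ) (t : ℝ), f x < t → L x + t * β < u := by
    intro x t hxt
    have := h1 (x, t) hxt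
    rwa [hlin] at this
  have hβ : β < 0 := by
    have hA := hmem P (f P + 1) (by linarith)
    rw [hlin] at h2'
    linarith
  have hmain : ∀ x : Fin n → ℝ, L x + f x * β ≤ L P + f P * β := by
    intro x
    rw [hlin] at h2'
    apply le_of_forall_pos_le_add
    intro ε hε
    have hs : 0 < ε / (-β) := div_pos hε (by linarith)
    have := hmem x (f x + ε / (-β)) (by linarith)
    have hβne : β ≠ 0 := by linarith
    have hcalc : (f x + ε / (-β)) * β = f x * β - ε := by
      rw [add_mul, div_mul_eq_mul_div, mul_div_assoc, div_neg, div_self hβne]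
      ring
    rw [hcalc] at this
    linarith
  refine ⟨fun i => ℓ (Pi.single i 1, 0) / (-β), fun x => ?_⟩
  have hLsum : ∀ v : Fin n → ℝ, L v = ∑ i, v i * ℓ (Pi.single i 1, 0) := by
    intro v
    have hv : ((v, 0) : (Fin n → ℝ) × ℝ) = ∑ i, ((Pi.single i (v i) : Fin n → ℝ), (0:ℝ)) := by
      rw [Prod.ext_iff, Prod.fst_sum, Prod.snd_sum]
      constructor
      · simp [Finset.univ_sum_single]
      · simp
    rw [hLdef]
    simp only
    rw [hv, map_sum]
    apply Finset.sum_congr rfl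
    intro i _
    have hps : ((Pi.single i (v i) : Fin n → ℝ), (0:ℝ)) = v i • ((Pi.single i 1 : Fin n → ℝ), (0:ℝ)) := by
      rw [Prod.smul_mk, smul_zero, ← single_eq_smul]
    rw [hps, ℓ.map_smul]
    simp
  have hKey : L (x - P) ≤ (f x - f P) * (-β) := by
    have hLsub : L (x - P) = L x - L P := by
      have : ((x - P, 0) : (Fin n → ℝ) × ℝ) = (x, 0) - (P, 0) := by
        simp [Prod.ext_iff]
      simp only [hLdef]
      rw [this, map_sub]
    have := hmain x
    rw [hLsub]
    nlinarith
  have hvdot : vdot (fun i => ℓ (Pi.single i 1, 0) / (-β)) (x - P) = L (x - P) / (-β) := by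
    unfold vdot
    rw [hLsum (x - P), Finset.sum_div]
    apply Finset.sum_congr rfl
    intro i _
    ring
  rw [hvdot]
  have hβpos : 0 < -β := by linarith
  have h3 : L (x - P) / (-β) ≤ f x - f P := (div_le_iff₀ hβpos).mpr hKey
  linarith

end HXiAux
namespace HXiAux
open Set Filter

/-! ### Ultrafilter limits of bounded real sequences -/

noncomputable def ulim (U : Ultrafilter ℕ) (u : ℕ → ℝ) : ℝ := limUnder (U : Filter ℕ) u

lemma tendsto_ulim (U : Ultrafilter ℕ) {u : ℕ → ℝ} {C : ℝ}
    (hC : ∀ k, u k ∈ Icc (-C) C) : Tendsto u (U : Filter ℕ) (𝓝 (ulim U u)) := by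
  have hex : ∃ L, Tendsto u (U : Filter ℕ) (𝓝 L) := by
    have hle : (Ultrafilter.map u U : Filter ℝ) ≤ 𝓟 (Icc (-C) C) := by
      rw [Filter.le_principal_iff]
      rw [Ultrafilter.coe_map, Filter.mem_map]
      have : (u ⁻¹' Icc (-C) C) = Set.univ := by
        ext k; simpa using hC k
      rw [this]
      exact Filter.univ_mem
    obtain ⟨L, _, hL⟩ := (isCompact_Icc (a := -C) (b := C)).ultrafilter_le_nhds
      (Ultrafilter.map u U) hle
    refine ⟨L, ?_⟩
    rwa [Ultrafilter.coe_map] at hL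
  exact tendsto_nhds_limUnder hex

lemma ulim_eq (U : Ultrafilter ℕ) {u : ℕ → ℝ} {L : ℝ}
    (h : Tendsto u (U : Filter ℕ) (𝓝 L)) : ulim U u = L :=
  tendsto_nhds_unique (tendsto_nhds_limUnder ⟨L, h⟩) h

/-! ### Dyadic boxes -/

variable {n : ℕ}

def cIdx (hn : 0 < n) (m : ℕ) : Fin n := ⟨m % n, Nat.mod_lt m hn⟩

noncomputable def SZ (hn : 0 < n) : ℕ → Fin n → ℝ
  | 0 => fun _ => 1
  | m + 1 => Function.update (SZ hn m) (cIdx hn m) (SZ hn m (cIdx hn m) / 2)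

def BoxS (lo sz : Fin n → ℝ) : Set (Fin n → ℝ) := {x | ∀ i, lo i ≤ x i ∧ x i < lo i + sz i}

def TBox (lo sz : Fin n → ℝ) : Set (Torus n) := Trep n ⁻¹' BoxS lo sz

noncomputable def massB (U : Ultrafilter ℕ) (μs : ℕ → Measure (Torus n))
    (lo sz : Fin n → ℝ) : ℝ := ulim U (fun k => (μs k (TBox lo sz)).toReal)

noncomputable def loR (hn : 0 < n) (m : ℕ) (lo : Fin n → ℝ) : Fin n → ℝ :=
  Function.update lo (cIdx hn m) (lo (cIdx hn m) + SZ hn m (cIdx hn m) / 2)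

lemma SZ_pos (hn : 0 < n) : ∀ m i, 0 < SZ hn m i := by
  intro m
  induction m with
  | zero => intro i; norm_num [SZ]
  | succ m ih =>
    intro i
    rcases eq_or_ne i (cIdx hn m) with h | h
    · subst h; simp only [SZ, Function.update_self]; linarith [ih (cIdx hn m)]
    · simp only [SZ, Function.update_of_ne h]; exact ih i

lemma SZ_succ_le (hn : 0 < n) (m : ℕ) (i : Fin n) : SZ hn (m+1) i ≤ SZ hn m i := by
  rcases eq_or_ne i (cIdx hn m) with h | h
  · subst h; simp only [SZ, Function.update_self]; linarith [SZ_pos hn m (cIdx hn m)]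
  · simp only [SZ, Function.update_of_ne h]
    exact le_refl _

lemma SZ_antitone (hn : 0 < n) {m m' : ℕ} (h : m ≤ m') (i : Fin n) :
    SZ hn m' i ≤ SZ hn m i := by
  induction m' with
  | zero => simp [Nat.le_zero.mp h]
  | succ k ih =>
    rcases Nat.lt_or_ge m (k+1) with hl | hg
    · exact le_trans (SZ_succ_le hn k i) (ih (Nat.lt_succ_iff.mp hl))
    · have : m = k + 1 := le_antisymm h hg
      subst this; rfl

lemma SZ_small (hn : 0 < n) (q : ℕ) (i : Fin n) : SZ hn (q*n) i ≤ (1/2)^q := by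
  induction q with
  | zero => simp [SZ]
  | succ q ih =>
    have hidx : cIdx hn (q*n + i.1) = i := by
      apply Fin.ext
      show (q*n + i.1) % n = i.1
      rw [Nat.add_comm, Nat.add_mul_mod_self_right]
      exact Nat.mod_eq_of_lt i.isLt
    have hstep : SZ hn (q*n + i.1 + 1) i = SZ hn (q*n + i.1) i / 2 := by
      conv_lhs => rw [show q*n + i.1 + 1 = (q*n + i.1) + 1 from rfl]
      simp only [SZ]
      rw [hidx, Function.update_self]
    have h1 : SZ hn ((q+1)*n) i ≤ SZ hn (q*n + i.1 + 1) i := by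
      apply SZ_antitone
      have : i.1 + 1 ≤ n := i.isLt
      calc q*n + i.1 + 1 ≤ q*n + n := by omega
        _ = (q+1)*n := by ring
    have h2 : SZ hn (q*n + i.1) i ≤ SZ hn (q*n) i := SZ_antitone hn (by omega) i
    calc SZ hn ((q+1)*n) i ≤ SZ hn (q*n + i.1) i / 2 := by rw [← hstep]; exact h1
      _ ≤ (1/2)^q / 2 := by linarith
      _ = (1/2)^(q+1) := by ring

lemma measurableSet_BoxS (lo sz : Fin n → ℝ) : MeasurableSet (BoxS lo sz) := by
  have : BoxS lo sz = Set.pi Set.univ (fun i => Ico (lo i) (lo i + sz i)) := by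
    ext x
    simp [BoxS, Set.mem_pi, mem_Ico]
  rw [this]
  exact MeasurableSet.univ_pi fun i => measurableSet_Ico

lemma measurableSet_TBox (lo sz : Fin n → ℝ) : MeasurableSet (TBox lo sz) :=
  trep_measurable (measurableSet_BoxS lo sz)

lemma massB_mem (U : Ultrafilter ℕ) (μs : ℕ → Measure (Torus n))
    (hμ : ∀ k, IsProbabilityMeasure (μs k)) (lo sz : Fin n → ℝ) :
    massB U μs lo sz ∈ Icc (0:ℝ) 1 := by
  have hb : ∀ k, (μs k (TBox lo sz)).toReal ∈ Icc (-1:ℝ) 1 := by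
    intro k
    have h1 : μs k (TBox lo sz) ≤ 1 := (hμ k).measure_univ ▸ measure_mono (subset_univ _)
    constructor
    · linarith [ENNReal.toReal_nonneg (a := μs k (TBox lo sz))]
    · exact ENNReal.toReal_le_of_le_ofReal one_pos.le (by simpa using h1)
  have ht := tendsto_ulim U hb
  constructor
  · exact ge_of_tendsto ht (Filter.Eventually.of_forall fun k => ENNReal.toReal_nonneg)
  · exact le_of_tendsto ht (Filter.Eventually.of_forall fun k => (hb k).2)

lemma tendsto_massB (U : Ultrafilter ℕ) (μs : ℕ → Measure (Torus n))
    (hμ : ∀ k, IsProbabilityMeasure (μs k)) (lo sz : Fin n → ℝ) :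
    Tendsto (fun k => (μs k (TBox lo sz)).toReal) (U : Filter ℕ) (𝓝 (massB U μs lo sz)) := by
  apply tendsto_ulim U (C := 1)
  intro k
  have h1 : μs k (TBox lo sz) ≤ 1 := (hμ k).measure_univ ▸ measure_mono (subset_univ _)
  constructor
  · linarith [ENNReal.toReal_nonneg (a := μs k (TBox lo sz))]
  · exact ENNReal.toReal_le_of_le_ofReal one_pos.le (by simpa using h1)

end HXiAux
namespace HXiAux
open Set Filter

variable {n : ℕ}

lemma boxL_subset (hn : 0 < n) (m : ℕ) (lo : Fin n → ℝ) :
    BoxS lo (SZ hn (m+1)) ⊆ BoxS lo (SZ hn m) := by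
  intro x hx i
  exact ⟨(hx i).1, lt_of_lt_of_le (hx i).2 (by linarith [SZ_succ_le hn m i])⟩

lemma boxR_subset (hn : 0 < n) (m : ℕ) (lo : Fin n → ℝ) :
    BoxS (loR hn m lo) (SZ hn (m+1)) ⊆ BoxS lo (SZ hn m) := by
  intro x hx i
  rcases eq_or_ne i (cIdx hn m) with h | h
  · subst h
    have h1 := (hx (cIdx hn m)).1
    have h2 := (hx (cIdx hn m)).2
    rw [loR, Function.update_self] at h1 h2
    have h3 : SZ hn (m+1) (cIdx hn m) = SZ hn m (cIdx hn m) / 2 := by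
      simp [SZ, Function.update_self]
    rw [h3] at h2
    constructor
    · linarith [SZ_pos hn m (cIdx hn m)]
    · linarith
  · have h1 := (hx i).1
    have h2 := (hx i).2
    rw [loR, Function.update_of_ne h] at h1 h2
    have h3 : SZ hn (m+1) i = SZ hn m i := by
      simp [SZ, Function.update_of_ne h]
    rw [h3] at h2
    exact ⟨h1, h2⟩

lemma box_split_iff (hn : 0 < n) (m : ℕ) (lo : Fin n → ℝ) (x : Fin n → ℝ) :
    x ∈ BoxS lo (SZ hn m) ↔
      (x ∈ BoxS lo (SZ hn (m+1)) ∨ x ∈ BoxS (loR hn m lo) (SZ hn (m+1))) := by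
  set c := cIdx hn m with hc
  have hszc : SZ hn (m+1) c = SZ hn m c / 2 := by simp [SZ, ← hc, Function.update_self]
  have hszo : ∀ i, i ≠ c → SZ hn (m+1) i = SZ hn m i := by
    intro i h; simp [SZ, ← hc, Function.update_of_ne h]
  constructor
  · intro hx
    rcases lt_or_ge (x c) (lo c + SZ hn m c / 2) with hlt | hge
    · left
      intro i
      rcases eq_or_ne i c with h | h
      · subst h; rw [hszc]; exact ⟨(hx c).1, hlt⟩
      · rw [hszo i h]; exact hx i
    · right
      intro i
      rcases eq_or_ne i c with h | h
      · subst h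
        rw [hszc, loR, ← hc, Function.update_self]
        refine ⟨hge, ?_⟩
        have := (hx c).2
        linarith
      · rw [hszo i h, loR, ← hc, Function.update_of_ne h]
        exact hx i
  · rintro (hx | hx)
    · exact boxL_subset hn m lo hx
    · exact boxR_subset hn m lo hx

lemma box_split_disjoint (hn : 0 < n) (m : ℕ) (lo : Fin n → ℝ) (x : Fin n → ℝ)
    (h1 : x ∈ BoxS lo (SZ hn (m+1))) (h2 : x ∈ BoxS (loR hn m lo) (SZ hn (m+1))) : False := by
  set c := cIdx hn m with hc
  have hszc : SZ hn (m+1) c = SZ hn m c / 2 := by simp [SZ, ← hc, Function.update_self]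
  have ha := (h1 c).2
  have hb := (h2 c).1
  rw [hszc] at ha
  rw [loR, ← hc, Function.update_self] at hb
  linarith

lemma TBox_split (hn : 0 < n) (m : ℕ) (lo : Fin n → ℝ) :
    TBox lo (SZ hn m) = TBox lo (SZ hn (m+1)) ∪ TBox (loR hn m lo) (SZ hn (m+1)) := by
  have hbox : BoxS lo (SZ hn m)
      = BoxS lo (SZ hn (m+1)) ∪ BoxS (loR hn m lo) (SZ hn (m+1)) := by
    ext z
    exact box_split_iff hn m lo z
  unfold TBox
  rw [hbox, Set.preimage_union]

lemma massB_split (hn : 0 < n) (U : Ultrafilter ℕ) (μs : ℕ → Measure (Torus n))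
    (hμ : ∀ k, IsProbabilityMeasure (μs k)) (m : ℕ) (lo : Fin n → ℝ) :
    massB U μs lo (SZ hn m) =
      massB U μs lo (SZ hn (m+1)) + massB U μs (loR hn m lo) (SZ hn (m+1)) := by
  apply ulim_eq
  have hTL := tendsto_massB U μs hμ lo (SZ hn (m+1))
  have hTR := tendsto_massB U μs hμ (loR hn m lo) (SZ hn (m+1))
  have heq : ∀ k, (μs k (TBox lo (SZ hn m))).toReal
      = (μs k (TBox lo (SZ hn (m+1)))).toReal
        + (μs k (TBox (loR hn m lo) (SZ hn (m+1)))).toReal := by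
    intro k
    have hdisj : Disjoint (TBox lo (SZ hn (m+1))) (TBox (loR hn m lo) (SZ hn (m+1))) := by
      rw [Set.disjoint_left]
      intro y hy1 hy2
      exact box_split_disjoint hn m lo _ hy1 hy2
    rw [TBox_split hn m lo, measure_union hdisj (measurableSet_TBox _ _),
      ENNReal.toReal_add (measure_ne_top _ _) (measure_ne_top _ _)]
  exact Tendsto.congr (fun k => (heq k).symm) (hTL.add hTR)

lemma TBox_root (hn : 0 < n) : TBox (fun _ : Fin n => (0:ℝ)) (SZ hn 0) = Set.univ := by
  ext y
  simp only [TBox, Set.mem_preimage, Set.mem_univ, iff_true]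
  intro i
  have := trep_mem y i
  simp only [SZ]
  exact ⟨this.1, by simpa using this.2⟩

lemma massB_root (hn : 0 < n) (U : Ultrafilter ℕ) (μs : ℕ → Measure (Torus n))
    (hμ : ∀ k, IsProbabilityMeasure (μs k)) :
    massB U μs (fun _ => 0) (SZ hn 0) = 1 := by
  apply ulim_eq
  have : ∀ k, (μs k (TBox (fun _ : Fin n => (0:ℝ)) (SZ hn 0))).toReal = 1 := by
    intro k
    rw [TBox_root hn, (hμ k).measure_univ]
    simp
  simp only [this]
  exact tendsto_const_nhds

/-! ### The state recursion and reachable states -/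

noncomputable def sstep (hn : 0 < n) (U : Ultrafilter ℕ) (μs : ℕ → Measure (Torus n))
    (m : ℕ) (t : ℝ) (s : ℝ × (Fin n → ℝ)) : ℝ × (Fin n → ℝ) :=
  if t < s.1 + massB U μs s.2 (SZ hn (m+1)) then s
  else (s.1 + massB U μs s.2 (SZ hn (m+1)), loR hn m s.2)

noncomputable def sigm (hn : 0 < n) (U : Ultrafilter ℕ) (μs : ℕ → Measure (Torus n))
    (t : ℝ) : ℕ → ℝ × (Fin n → ℝ)
  | 0 => (0, fun _ => 0)
  | m + 1 => sstep hn U μs m t (sigm hn U μs t m)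

open scoped Classical in
noncomputable def TmF (hn : 0 < n) (U : Ultrafilter ℕ) (μs : ℕ → Measure (Torus n)) :
    ℕ → Finset (ℝ × (Fin n → ℝ))
  | 0 => {((0:ℝ), fun _ : Fin n => (0:ℝ))}
  | m + 1 => TmF hn U μs m ∪
      (TmF hn U μs m).image
        (fun s => (s.1 + massB U μs s.2 (SZ hn (m+1)), loR hn m s.2))

end HXiAux
namespace HXiAux
open Set Filter

variable {n : ℕ}

section Invariant

variable (hn : 0 < n) (U : Ultrafilter ℕ) (μs : ℕ → Measure (Torus n))

/-- The full invariant at level `m`. -/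
def InvP (m : ℕ) : Prop :=
  (∀ s ∈ TmF hn U μs m, (∀ i, 0 ≤ s.2 i ∧ s.2 i + SZ hn m i ≤ 1)
      ∧ 0 ≤ s.1 ∧ s.1 + massB U μs s.2 (SZ hn m) ≤ 1)
  ∧ (∀ s ∈ TmF hn U μs m, ∀ s' ∈ TmF hn U μs m, s ≠ s' →
      ∀ x, x ∈ BoxS s.2 (SZ hn m) → x ∉ BoxS s'.2 (SZ hn m))
  ∧ (∀ x : Fin n → ℝ, (∀ i, 0 ≤ x i ∧ x i < 1) →
      ∃ s ∈ TmF hn U μs m, x ∈ BoxS s.2 (SZ hn m))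
  ∧ (∀ t ∈ Ico (0:ℝ) 1, sigm hn U μs t m ∈ TmF hn U μs m)
  ∧ (∀ s ∈ TmF hn U μs m, ∀ t ∈ Ico (0:ℝ) 1,
      (sigm hn U μs t m = s ↔ t ∈ Ico s.1 (s.1 + massB U μs s.2 (SZ hn m))))

lemma invP_holds (hμ : ∀ k, IsProbabilityMeasure (μs k)) : ∀ m, InvP hn U μs m := by
  intro m
  induction m with
  | zero =>
    have hroot : ∀ s ∈ TmF hn U μs 0, s = ((0:ℝ), fun _ : Fin n => (0:ℝ)) := by
      intro s hs
      simpa [TmF] using hs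
    have hrootmem : ((0:ℝ), fun _ : Fin n => (0:ℝ)) ∈ TmF hn U μs 0 := by simp [TmF]
    refine ⟨?_, ?_, ?_, ?_, ?_⟩
    · intro s hs
      rw [hroot s hs]
      refine ⟨fun i => ?_, le_refl _, ?_⟩
      · simp [SZ]
      · rw [massB_root hn U μs hμ]; norm_num
    · intro s hs s' hs' hne
      rw [hroot s hs, hroot s' hs'] at hne
      exact absurd rfl hne
    · intro x hx
      refine ⟨_, hrootmem, fun i => ?_⟩
      simpa [SZ] using hx i
    · intro t ht
      simpa [sigm] using hrootmem
    · intro s hs t ht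
      rw [hroot s hs]
      constructor
      · intro _
        rw [massB_root hn U μs hμ]
        simpa using ht
      · intro _
        rfl
  | succ m ih =>
    obtain ⟨ihGood, ihDisj, ihCover, ihMem, ihInt⟩ := ih
    -- abbreviations
    set M := massB U μs with hM
    have hmassnn : ∀ lo sz, 0 ≤ M lo sz := fun lo sz => (massB_mem U μs hμ lo sz).1
    have hsplit : ∀ lo, M lo (SZ hn m) = M lo (SZ hn (m+1)) + M (loR hn m lo) (SZ hn (m+1)) :=
      fun lo => massB_split hn U μs hμ m lo
    have hmemsucc : ∀ s', s' ∈ TmF hn U μs (m+1) ↔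
        (s' ∈ TmF hn U μs m ∨ ∃ s ∈ TmF hn U μs m,
          s' = (s.1 + M s.2 (SZ hn (m+1)), loR hn m s.2)) := by
      intro s'
      classical
      simp [TmF, Finset.mem_union, Finset.mem_image, eq_comm, hM]
    refine ⟨?_, ?_, ?_, ?_, ?_⟩
    -- (1) Good states
    · intro s' hs'
      rcases (hmemsucc s').mp hs' with h | ⟨s, hs, rfl⟩
      · obtain ⟨hbox, ha, hint⟩ := ihGood s' h
        refine ⟨fun i => ⟨(hbox i).1, le_trans (by linarith [SZ_succ_le hn m i]) (hbox i).2⟩,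
          ha, ?_⟩
        have := hsplit s'.2
        have := hmassnn (loR hn m s'.2) (SZ hn (m+1))
        linarith
      · obtain ⟨hbox, ha, hint⟩ := ihGood s hs
        constructor
        · intro i
          dsimp only
          rcases eq_or_ne i (cIdx hn m) with hi | hi
          · subst hi
            rw [loR, Function.update_self]
            have h3 : SZ hn (m+1) (cIdx hn m) = SZ hn m (cIdx hn m) / 2 := by
              simp [SZ, Function.update_self]
            rw [h3]
            have := (hbox (cIdx hn m)).1
            have := (hbox (cIdx hn m)).2
            constructor
            · linarith [SZ_pos hn m (cIdx hn m)]
            · linarith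
          · rw [loR, Function.update_of_ne hi]
            have h3 : SZ hn (m+1) i = SZ hn m i := by
              simp [SZ, Function.update_of_ne hi]
            rw [h3]
            exact ⟨(hbox i).1, le_trans (by linarith [SZ_succ_le hn m i]) (hbox i).2⟩
        · constructor
          · have := hmassnn s.2 (SZ hn (m+1))
            dsimp only
            linarith
          · dsimp only
            have := hsplit s.2
            linarith
    -- (2) disjointness
    · intro s1 hs1 s2 hs2 hne x hx1 hx2
      have key : ∀ s' ∈ TmF hn U μs (m+1), ∀ z, z ∈ BoxS s'.2 (SZ hn (m+1)) →
          ∃ s ∈ TmF hn U μs m, z ∈ BoxS s.2 (SZ hn m) ∧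
            (s' = s ∨ s' = (s.1 + M s.2 (SZ hn (m+1)), loR hn m s.2)) := by
        intro s' hs' z hz
        rcases (hmemsucc s').mp hs' with h | ⟨s, hs, rfl⟩
        · exact ⟨s', h, boxL_subset hn m s'.2 hz, Or.inl rfl⟩
        · exact ⟨s, hs, boxR_subset hn m s.2 hz, Or.inr rfl⟩
      obtain ⟨p1, hp1, hxp1, hc1⟩ := key s1 hs1 x hx1
      obtain ⟨p2, hp2, hxp2, hc2⟩ := key s2 hs2 x hx2
      rcases eq_or_ne p1 p2 with hp | hp
      · subst hp
        rcases hc1 with h1 | h1 <;> rcases hc2 with h2 | h2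
        · exact hne (h1.trans h2.symm)
        · subst h1; subst h2
          exact box_split_disjoint hn m s1.2 x hx1 hx2
        · subst h1; subst h2
          exact box_split_disjoint hn m s2.2 x hx2 hx1
        · exact hne (h1.trans h2.symm)
      · exact ihDisj p1 hp1 p2 hp2 hp x hxp1 hxp2
    -- (3) cover
    · intro x hx
      obtain ⟨s, hs, hxs⟩ := ihCover x hx
      rcases (box_split_iff hn m s.2 x).mp hxs with h | h
      · exact ⟨s, (hmemsucc s).mpr (Or.inl hs), h⟩
      · exact ⟨(s.1 + M s.2 (SZ hn (m+1)), loR hn m s.2),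
          (hmemsucc _).mpr (Or.inr ⟨s, hs, rfl⟩), h⟩
    -- (4) membership of sigma
    · intro t ht
      have h0 := ihMem t ht
      have hrw : sigm hn U μs t (m+1) = sstep hn U μs m t (sigm hn U μs t m) := rfl
      rw [hrw]
      unfold sstep
      split_ifs
      · exact (hmemsucc _).mpr (Or.inl h0)
      · exact (hmemsucc _).mpr (Or.inr ⟨_, h0, rfl⟩)
    -- (5) interval characterization
    · intro s' hs' t ht
      have hσmem := ihMem t ht
      have hIm := ihInt _ hσmem t ht
      have htmem : t ∈ Ico (sigm hn U μs t m).1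
          ((sigm hn U μs t m).1 + M (sigm hn U μs t m).2 (SZ hn m)) := hIm.mp rfl
      constructor
      · -- σ (m+1) = s' → t in interval of s'
        intro heq
        rw [← heq]
        have hrw : sigm hn U μs t (m+1) = sstep hn U μs m t (sigm hn U μs t m) := rfl
        rw [hrw]
        unfold sstep
        split_ifs with hbr
        · exact ⟨htmem.1, hbr⟩
        · dsimp only
          constructor
          · simpa using not_lt.mp hbr
          · have h2 := htmem.2
            have h3 := hsplit (sigm hn U μs t m).2
            linarith
      · -- t in interval of s' → σ (m+1) = s'
        intro htI
        rcases (hmemsucc s').mp hs' with h | ⟨s, hs, rfl⟩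
        · -- s' is its own left child
          have hsub : t ∈ Ico s'.1 (s'.1 + M s'.2 (SZ hn m)) := by
            obtain ⟨h1, h2⟩ := htI
            refine ⟨h1, lt_of_lt_of_le h2 ?_⟩
            have := hsplit s'.2
            have := hmassnn (loR hn m s'.2) (SZ hn (m+1))
            linarith
          have hσ : sigm hn U μs t m = s' := (ihInt s' h t ht).mpr hsub
          have hrw : sigm hn U μs t (m+1) = sstep hn U μs m t (sigm hn U μs t m) := rfl
          rw [hrw, hσ]
          unfold sstep
          rw [if_pos htI.2]
        · -- s' is a right child of s
          have hsub : t ∈ Ico s.1 (s.1 + M s.2 (SZ hn m)) := by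
            obtain ⟨h1, h2⟩ := htI
            simp only at h1 h2
            constructor
            · have := hmassnn s.2 (SZ hn (m+1))
              linarith
            · have := hsplit s.2
              linarith
          have hσ : sigm hn U μs t m = s := (ihInt s hs t ht).mpr hsub
          have hrw : sigm hn U μs t (m+1) = sstep hn U μs m t (sigm hn U μs t m) := rfl
          rw [hrw, hσ]
          unfold sstep
          rw [if_neg (not_lt.mpr (by simpa using htI.1))]

end Invariant

end HXiAux
namespace HXiAux
open Set Filter

variable {n : ℕ}

section LimitMap

variable (hn : 0 < n) (U : Ultrafilter ℕ) (μs : ℕ → Measure (Torus n))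

/-- The level-`m` corner function, cut off outside `[0,1)`. -/
noncomputable def gmf (m : ℕ) (t : ℝ) : Fin n → ℝ :=
  if t ∈ Ico (0:ℝ) 1 then (sigm hn U μs t m).2 else 0

/-- The limit representative map. -/
noncomputable def rhof (t : ℝ) : Fin n → ℝ := limUnder atTop (fun m => gmf hn U μs m t)

lemma corner_self (t : ℝ) (m : ℕ) :
    (sigm hn U μs t m).2 ∈ BoxS (sigm hn U μs t m).2 (SZ hn m) :=
  fun i => ⟨le_refl _, by linarith [SZ_pos hn m i]⟩

lemma corner_step_mem (t : ℝ) (m : ℕ) :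
    BoxS (sigm hn U μs t (m+1)).2 (SZ hn (m+1)) ⊆ BoxS (sigm hn U μs t m).2 (SZ hn m) := by
  have hrw : sigm hn U μs t (m+1) = sstep hn U μs m t (sigm hn U μs t m) := rfl
  rw [hrw]
  unfold sstep
  split_ifs
  · exact boxL_subset hn m _
  · exact boxR_subset hn m _

lemma box_chain (t : ℝ) {m m' : ℕ} (h : m ≤ m') :
    BoxS (sigm hn U μs t m').2 (SZ hn m') ⊆ BoxS (sigm hn U μs t m).2 (SZ hn m) := by
  induction m' with
  | zero =>
    have : m = 0 := Nat.le_zero.mp h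
    subst this; exact subset_rfl
  | succ k ih =>
    rcases Nat.lt_or_ge m (k+1) with hl | hg
    · exact subset_trans (corner_step_mem hn U μs t k) (ih (Nat.lt_succ_iff.mp hl))
    · have : m = k + 1 := le_antisymm h hg
      subst this; exact subset_rfl

lemma corner_nested (t : ℝ) {m m' : ℕ} (h : m ≤ m') :
    (sigm hn U μs t m').2 ∈ BoxS (sigm hn U μs t m).2 (SZ hn m) :=
  box_chain hn U μs t h (corner_self hn U μs t m')

lemma tendsto_gmf (t : ℝ) : ∃ L, Tendsto (fun m => gmf hn U μs m t) atTop (𝓝 L) := by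
  by_cases ht : t ∈ Ico (0:ℝ) 1
  · have hcauchy : CauchySeq (fun m => gmf hn U μs m t) := by
      rw [Metric.cauchySeq_iff']
      intro ε hε
      obtain ⟨q, hq⟩ := exists_pow_lt_of_lt_one hε (show (1/2:ℝ) < 1 by norm_num)
      refine ⟨q * n, fun m hm => ?_⟩
      rw [dist_pi_lt_iff hε]
      intro i
      have h1 : (sigm hn U μs t m).2 ∈ BoxS (sigm hn U μs t (q*n)).2 (SZ hn (q*n)) :=
        corner_nested hn U μs t hm
      have h2 := (h1 i).1
      have h3 := (h1 i).2
      have h4 := SZ_small hn q i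
      simp only [gmf, if_pos ht]
      rw [Real.dist_eq, abs_sub_lt_iff]
      constructor <;> linarith
    exact cauchySeq_tendsto_of_complete hcauchy
  · refine ⟨0, ?_⟩
    have : (fun m => gmf hn U μs m t) = fun _ => 0 := by
      funext m; simp [gmf, ht]
    rw [this]
    exact tendsto_const_nhds

lemma tendsto_rhof (t : ℝ) :
    Tendsto (fun m => gmf hn U μs m t) atTop (𝓝 (rhof hn U μs t)) :=
  tendsto_nhds_limUnder (tendsto_gmf hn U μs t)

lemma rhof_bounds (t : ℝ) (ht : t ∈ Ico (0:ℝ) 1) (m : ℕ) (i : Fin n) :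
    (sigm hn U μs t m).2 i ≤ rhof hn U μs t i ∧
      rhof hn U μs t i ≤ (sigm hn U μs t m).2 i + SZ hn m i := by
  have hti : Tendsto (fun m' => gmf hn U μs m' t i) atTop (𝓝 (rhof hn U μs t i)) :=
    (tendsto_pi_nhds.mp (tendsto_rhof hn U μs t)) i
  constructor
  · apply ge_of_tendsto hti
    filter_upwards [Filter.eventually_ge_atTop m] with m' hm'
    simp only [gmf, if_pos ht]
    exact ((corner_nested hn U μs t hm') i).1
  · apply le_of_tendsto hti
    filter_upwards [Filter.eventually_ge_atTop m] with m' hm'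
    simp only [gmf, if_pos ht]
    have := ((corner_nested hn U μs t hm') i).2
    linarith

end LimitMap

end HXiAux
namespace HXiAux
open Set Filter

variable {n : ℕ}

section CoreMeasure

variable (hn : 0 < n) (U : Ultrafilter ℕ) (μs : ℕ → Measure (Torus n))

lemma gmf_eq_sum (hμ : ∀ k, IsProbabilityMeasure (μs k)) (m : ℕ) :
    gmf hn U μs m = fun t =>
      ∑ s ∈ TmF hn U μs m,
        (Ico s.1 (s.1 + massB U μs s.2 (SZ hn m))).indicator (fun _ => s.2) t := by
  obtain ⟨hGood, hDisj, hCover, hMem, hInt⟩ := invP_holds hn U μs hμ m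
  funext t
  by_cases ht : t ∈ Ico (0:ℝ) 1
  · rw [Finset.sum_eq_single_of_mem _ (hMem t ht)]
    · rw [Set.indicator_of_mem ((hInt _ (hMem t ht) t ht).mp rfl)]
      simp only [gmf, if_pos ht]
    · intro s hs hne
      apply Set.indicator_of_notMem
      intro htI
      exact hne (((hInt s hs t ht).mpr htI).symm)
  · rw [Finset.sum_eq_zero]
    · simp only [gmf, if_neg ht]
    · intro s hs
      apply Set.indicator_of_notMem
      intro htI
      obtain ⟨_, ha, hb⟩ := hGood s hs
      exact ht ⟨le_trans ha htI.1, lt_of_lt_of_le htI.2 hb⟩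

lemma gmf_measurable (hμ : ∀ k, IsProbabilityMeasure (μs k)) (m : ℕ) :
    Measurable (gmf hn U μs m) := by
  rw [gmf_eq_sum hn U μs hμ m]
  exact Finset.measurable_sum _ fun s _ =>
    Measurable.indicator measurable_const measurableSet_Ico

lemma rhof_measurable (hμ : ∀ k, IsProbabilityMeasure (μs k)) :
    Measurable (rhof hn U μs) :=
  measurable_of_tendsto_metrizable' atTop (gmf_measurable hn U μs hμ)
    (tendsto_pi_nhds.mpr fun t => tendsto_rhof hn U μs t)

/-- The limit measure on the torus. -/
noncomputable def muLim : Measure (Torus n) :=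
  Measure.map (fun t => Tproj n (rhof hn U μs t)) ((volume : Measure ℝ).restrict (Ico 0 1))

lemma muLim_prob (hμ : ∀ k, IsProbabilityMeasure (μs k)) :
    IsProbabilityMeasure (muLim hn U μs) := by
  haveI : IsProbabilityMeasure ((volume : Measure ℝ).restrict (Ico 0 1)) := by
    constructor
    rw [Measure.restrict_apply_univ]
    simp [Real.volume_Ico]
  exact Measure.isProbabilityMeasure_map
    ((tproj_continuous.measurable.comp (rhof_measurable hn U μs hμ)).aemeasurable)

end CoreMeasure

end HXiAux
namespace HXiAux
open Set Filter

variable {n : ℕ}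

theorem muLim_bound (hn : 0 < n) (U : Ultrafilter ℕ) (μs : ℕ → Measure (Torus n))
    (hμ : ∀ k, IsProbabilityMeasure (μs k))
    (G : (Fin n → ℝ) → ℝ) (hG : Continuous G) (hGper : ZPeriodic G)
    (L : ℝ) (hL : Tendsto (fun k => ∫ y, G (Trep n y) ∂(μs k)) (U : Filter ℕ) (𝓝 L)) :
    L ≤ ∫ y, G (Trep n y) ∂(muLim hn U μs) := by
  have hrhom : Measurable (rhof hn U μs) := rhof_measurable hn U μs hμ
  have hGTm : Measurable (fun y : Torus n => G (Trep n y)) :=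
    hG.measurable.comp trep_measurable
  -- rewrite the integral over muLim as an integral over [0,1)
  have hmap : ∫ y, G (Trep n y) ∂(muLim hn U μs) = ∫ t in Ico (0:ℝ) 1, G (rhof hn U μs t) := by
    unfold muLim
    have hbm : Measurable fun t => Tproj n (rhof hn U μs t) :=
      tproj_continuous.measurable.comp hrhom
    rw [MeasureTheory.integral_map hbm.aemeasurable hGTm.aestronglyMeasurable]
    exact MeasureTheory.integral_congr_ae (Filter.Eventually.of_forall fun t =>
      zperiodic_trep_tproj hGper _)
  obtain ⟨C, hC⟩ := (isCompact_Icc (a := (0:Fin n → ℝ)) (b := 1)).exists_bound_of_continuousOn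
    hG.continuousOn
  rw [hmap]
  apply le_of_forall_pos_le_add
  intro ε hε
  obtain ⟨δ, hδ, hδprop⟩ := unif_small hG (show (0:ℝ) < ε/2 by linarith)
  obtain ⟨q, hq⟩ := exists_pow_lt_of_lt_one hδ (show (1/2:ℝ) < 1 by norm_num)
  set m := q * n with hm
  obtain ⟨hGood, hDisj, hCover, hMem, hInt⟩ := invP_holds hn U μs hμ m
  have hszδ : ∀ i, SZ hn m i ≤ δ := fun i => le_of_lt (lt_of_le_of_lt (SZ_small hn q i) hq)
  have hcornerIcc : ∀ s ∈ TmF hn U μs m, s.2 ∈ Icc (0 : Fin n → ℝ) 1 := by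
    intro s hs
    obtain ⟨hbox, _, _⟩ := hGood s hs
    constructor
    · intro i; exact (hbox i).1
    · intro i
      have := (hbox i).2
      have := SZ_pos hn m i
      show s.2 i ≤ 1
      linarith
  have hrhoIcc : ∀ t ∈ Ico (0:ℝ) 1, rhof hn U μs t ∈ Icc (0 : Fin n → ℝ) 1 := by
    intro t ht
    have hb := rhof_bounds hn U μs t ht m
    have hmem := hMem t ht
    obtain ⟨hbox, _, _⟩ := hGood _ hmem
    constructor
    · intro i
      have := (hb i).1
      have := (hbox i).1
      show (0:ℝ) ≤ rhof hn U μs t i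
      linarith
    · intro i
      have := (hb i).2
      have := (hbox i).2
      show rhof hn U μs t i ≤ 1
      linarith
  have hclose1 : ∀ t ∈ Ico (0:ℝ) 1,
      |G (rhof hn U μs t) - G ((sigm hn U μs t m).2)| ≤ ε/2 := by
    intro t ht
    apply hδprop _ _ (hrhoIcc t ht) (hcornerIcc _ (hMem t ht))
    intro i
    have hb := rhof_bounds hn U μs t ht m i
    rw [abs_sub_le_iff]
    constructor
    · linarith [hszδ i]
    · linarith [hszδ i]
  set SUM : ℝ := ∑ s ∈ TmF hn U μs m, G s.2 * massB U μs s.2 (SZ hn m) with hSUM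
  -- Estimate A : step function integral
  have hIsub : ∀ s ∈ TmF hn U μs m,
      Ico s.1 (s.1 + massB U μs s.2 (SZ hn m)) ⊆ Ico (0:ℝ) 1 := by
    intro s hs
    obtain ⟨_, ha, hb⟩ := hGood s hs
    exact Ico_subset_Ico ha hb
  have hstep_int : ∀ s ∈ TmF hn U μs m,
      (∫ t in Ico (0:ℝ) 1,
        (Ico s.1 (s.1 + massB U μs s.2 (SZ hn m))).indicator (fun _ => G s.2) t)
      = G s.2 * massB U μs s.2 (SZ hn m) := by
    intro s hs
    rw [MeasureTheory.setIntegral_indicator measurableSet_Ico,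
      Set.inter_eq_self_of_subset_right (hIsub s hs), MeasureTheory.setIntegral_const]
    rw [Real.volume_real_Ico]
    have hmnn := (massB_mem U μs hμ s.2 (SZ hn m)).1
    rw [show s.1 + massB U μs s.2 (SZ hn m) - s.1 = massB U μs s.2 (SZ hn m) by ring,
      max_eq_left hmnn, smul_eq_mul, mul_comm]
  have hstep_sum : (∫ t in Ico (0:ℝ) 1, (∑ s ∈ TmF hn U μs m,
      (Ico s.1 (s.1 + massB U μs s.2 (SZ hn m))).indicator (fun _ => G s.2) t)) = SUM := by
    rw [MeasureTheory.integral_finset_sum _ (fun s _ =>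
      (integrable_const (G s.2)).indicator measurableSet_Ico)]
    exact Finset.sum_congr rfl hstep_int
  have hsumpt : ∀ t ∈ Ico (0:ℝ) 1, (∑ s ∈ TmF hn U μs m,
      (Ico s.1 (s.1 + massB U μs s.2 (SZ hn m))).indicator (fun _ => G s.2) t)
      = G ((sigm hn U μs t m).2) := by
    intro t ht
    rw [Finset.sum_eq_single_of_mem _ (hMem t ht)]
    · rw [Set.indicator_of_mem ((hInt _ (hMem t ht) t ht).mp rfl)]
    · intro s hs hne
      apply Set.indicator_of_notMem
      intro htI
      exact hne (((hInt s hs t ht).mpr htI).symm)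
  have hGrho_intble : MeasureTheory.IntegrableOn
      (fun t => G (rhof hn U μs t)) (Ico (0:ℝ) 1) := by
    apply MeasureTheory.Integrable.mono' (integrable_const C)
      ((hG.measurable.comp hrhom).aestronglyMeasurable)
    rw [MeasureTheory.ae_restrict_iff' measurableSet_Ico]
    exact MeasureTheory.ae_of_all _ fun t ht => hC _ (hrhoIcc t ht)
  have hstep_intble : MeasureTheory.IntegrableOn (fun t => (∑ s ∈ TmF hn U μs m,
      (Ico s.1 (s.1 + massB U μs s.2 (SZ hn m))).indicator (fun _ => G s.2) t) - ε/2)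
      (Ico (0:ℝ) 1) := by
    apply MeasureTheory.Integrable.sub _ (integrable_const _)
    exact MeasureTheory.integrable_finset_sum _ (fun s _ =>
      (integrable_const (G s.2)).indicator measurableSet_Ico)
  have hEstA : SUM - ε/2 ≤ ∫ t in Ico (0:ℝ) 1, G (rhof hn U μs t) := by
    have hmono := MeasureTheory.setIntegral_mono_on hstep_intble hGrho_intble
      measurableSet_Ico (fun t ht => by
        have h1 := hsumpt t ht
        have h2 := hclose1 t ht
        rw [h1]
        rw [abs_sub_le_iff] at h2
        linarith [h2.1])
    have hconst : (∫ t in Ico (0:ℝ) 1, ((ε:ℝ)/2)) = ε/2 := by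
      rw [MeasureTheory.setIntegral_const, Real.volume_real_Ico]
      norm_num
    rw [MeasureTheory.integral_sub (MeasureTheory.integrable_finset_sum _ (fun s _ =>
      (integrable_const (G s.2)).indicator measurableSet_Ico)) (integrable_const _),
      hstep_sum, hconst] at hmono
    exact hmono
  -- Estimate B : per-measure bound
  have hTBdisj : ∀ s ∈ TmF hn U μs m, ∀ s' ∈ TmF hn U μs m, s ≠ s' →
      Disjoint (TBox s.2 (SZ hn m)) (TBox s'.2 (SZ hn m)) := by
    intro s hs s' hs' hne
    rw [Set.disjoint_left]
    intro y hy1 hy2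
    exact hDisj s hs s' hs' hne _ hy1 hy2
  have hTBcover : (Set.univ : Set (Torus n)) = ⋃ s ∈ TmF hn U μs m, TBox s.2 (SZ hn m) := by
    ext y
    simp only [Set.mem_univ, true_iff, Set.mem_iUnion]
    obtain ⟨s, hs, hxs⟩ := hCover (Trep n y) (fun i => by
      have := trep_mem y i
      exact ⟨this.1, by simpa using this.2⟩)
    exact ⟨s, hs, hxs⟩
  have hEstB : ∀ k, (∫ y, G (Trep n y) ∂(μs k)) ≤
      (∑ s ∈ TmF hn U μs m, G s.2 * (μs k (TBox s.2 (SZ hn m))).toReal) + ε/2 := by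
    intro k
    haveI := hμ k
    have hpt : ∀ y : Torus n, G (Trep n y) ≤ ∑ s ∈ TmF hn U μs m,
        (TBox s.2 (SZ hn m)).indicator (fun _ => G s.2 + ε/2) y := by
      intro y
      obtain ⟨s0, hs0, hxs0⟩ := hCover (Trep n y) (fun i => by
        have := trep_mem y i
        exact ⟨this.1, by simpa using this.2⟩)
      have hsum : (∑ s ∈ TmF hn U μs m,
          (TBox s.2 (SZ hn m)).indicator (fun _ => G s.2 + ε/2) y) = G s0.2 + ε/2 := by
        rw [Finset.sum_eq_single_of_mem _ hs0]
        · exact Set.indicator_of_mem (show y ∈ TBox s0.2 (SZ hn m) from hxs0) _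
        · intro s hs hne
          apply Set.indicator_of_notMem
          intro hy
          exact hDisj s hs s0 hs0 hne _ hy hxs0
      rw [hsum]
      have htrepIcc : Trep n y ∈ Icc (0 : Fin n → ℝ) 1 := by
        constructor <;> intro i <;> have := trep_mem y i
        · exact this.1
        · exact le_of_lt this.2
      have hclose2 : |G (Trep n y) - G s0.2| ≤ ε/2 := by
        apply hδprop _ _ htrepIcc (hcornerIcc s0 hs0)
        intro i
        have h1 := (hxs0 i).1
        have h2 := (hxs0 i).2
        rw [abs_sub_le_iff]
        constructor
        · linarith [hszδ i]
        · linarith [hszδ i, SZ_pos hn m i]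
      rw [abs_sub_le_iff] at hclose2
      linarith [hclose2.1]
    have hrhs : (∫ y, (∑ s ∈ TmF hn U μs m,
        (TBox s.2 (SZ hn m)).indicator (fun _ => G s.2 + ε/2) y) ∂(μs k)) =
        ∑ s ∈ TmF hn U μs m, (μs k (TBox s.2 (SZ hn m))).toReal * (G s.2 + ε/2) := by
      rw [MeasureTheory.integral_finset_sum _ (fun s _ =>
        (integrable_const (G s.2 + ε/2)).indicator (measurableSet_TBox _ _))]
      apply Finset.sum_congr rfl
      intro s hs
      rw [MeasureTheory.integral_indicator (measurableSet_TBox _ _),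
        MeasureTheory.setIntegral_const, smul_eq_mul, Measure.real]
    have htot : (∑ s ∈ TmF hn U μs m, (μs k (TBox s.2 (SZ hn m))).toReal) = 1 := by
      have h1 : μs k (⋃ s ∈ TmF hn U μs m, TBox s.2 (SZ hn m)) =
          ∑ s ∈ TmF hn U μs m, μs k (TBox s.2 (SZ hn m)) := by
        apply MeasureTheory.measure_biUnion_finset
        · intro s hs s' hs' hne
          exact hTBdisj s hs s' hs' hne
        · intro s _
          exact measurableSet_TBox _ _
      rw [← hTBcover] at h1
      rw [← ENNReal.toReal_sum (fun s _ => measure_ne_top _ _), ← h1,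
        measure_univ, ENNReal.toReal_one]
    have hle := MeasureTheory.integral_mono (trep_comp_integrable hG (μs k))
      (MeasureTheory.integrable_finset_sum _ (fun s _ =>
        (integrable_const (G s.2 + ε/2)).indicator (measurableSet_TBox _ _))) hpt
    rw [hrhs] at hle
    calc (∫ y, G (Trep n y) ∂(μs k)) ≤
        ∑ s ∈ TmF hn U μs m, (μs k (TBox s.2 (SZ hn m))).toReal * (G s.2 + ε/2) := hle
      _ = (∑ s ∈ TmF hn U μs m, G s.2 * (μs k (TBox s.2 (SZ hn m))).toReal)
          + (ε/2) * (∑ s ∈ TmF hn U μs m, (μs k (TBox s.2 (SZ hn m))).toReal) := by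
          rw [Finset.mul_sum, ← Finset.sum_add_distrib]
          apply Finset.sum_congr rfl
          intro s _
          ring
      _ = (∑ s ∈ TmF hn U μs m, G s.2 * (μs k (TBox s.2 (SZ hn m))).toReal) + ε/2 := by
          rw [htot, mul_one]
  -- pass to the ultrafilter limit
  have hT : Tendsto (fun k => (∑ s ∈ TmF hn U μs m,
      G s.2 * (μs k (TBox s.2 (SZ hn m))).toReal) + ε/2) (U : Filter ℕ)
      (𝓝 (SUM + ε/2)) := by
    apply Tendsto.add _ tendsto_const_nhds
    exact tendsto_finset_sum _ (fun s _ =>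
      (tendsto_massB U μs hμ s.2 (SZ hn m)).const_mul (G s.2))
  have hLle : L ≤ SUM + ε/2 := le_of_tendsto_of_tendsto' hL hT hEstB
  linarith

end HXiAux
namespace HXiAux
open Set Filter

variable {n : ℕ}

lemma xi_integrable (Ξ : C(Torus n, ℝ)) (μ : Measure (Torus n)) [IsFiniteMeasure μ] :
    Integrable (fun y => Ξ y) μ :=
  (integrable_const ‖Ξ‖).mono' Ξ.continuous.measurable.aestronglyMeasurable
    (MeasureTheory.ae_of_all μ fun y => Ξ.norm_coe_le_norm y)

lemma xi_int_le (Ξ : C(Torus n, ℝ)) (μ : Measure (Torus n)) [IsProbabilityMeasure μ] :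
    (∫ y, Ξ y ∂μ) ≤ ‖Ξ‖ := by
  calc (∫ y, Ξ y ∂μ) ≤ ∫ _, ‖Ξ‖ ∂μ := by
        apply MeasureTheory.integral_mono (xi_integrable Ξ μ) (integrable_const _)
        intro y
        exact le_trans (le_abs_self _) (Ξ.norm_coe_le_norm y)
    _ = ‖Ξ‖ := by simp
  
lemma tproj_add_int (x : Fin n → ℝ) (z : Fin n → ℤ) :
    Tproj n (x + fun i => (z i : ℝ)) = Tproj n x := by
  funext i
  show (((x i + (z i : ℝ)) : ℝ) : AddCircle (1:ℝ)) = ((x i : ℝ) : AddCircle (1:ℝ))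
  rw [QuotientAddGroup.eq_iff_sub_mem]
  have : x i + (z i : ℝ) - x i = (z i : ℝ) := by ring
  rw [this]
  exact ⟨z i, by simp⟩

lemma vdot_J_sub (J a b : Fin n → ℝ) : vdot J (a - b) = vdot a J - vdot b J := by
  unfold vdot
  rw [← Finset.sum_sub_distrib]
  apply Finset.sum_congr rfl
  intro i _
  simp only [Pi.sub_apply]
  ring

/-- The defining set for `HXi`. -/
lemma HXi_eq (Ξ : C(Torus n, ℝ)) (P : Fin n → ℝ) :
    HXi Ξ P = sSup { r : ℝ | ∃ μ : Measure (Torus n), IsProbabilityMeasure μ ∧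
      r = (∫ y, Ξ y ∂μ) + Fdir μ P } := rfl

lemma HXiSet_nonempty (Ξ : C(Torus n, ℝ)) (P : Fin n → ℝ) :
    { r : ℝ | ∃ μ : Measure (Torus n), IsProbabilityMeasure μ ∧
      r = (∫ y, Ξ y ∂μ) + Fdir μ P }.Nonempty := by
  refine ⟨_, Measure.dirac (fun _ => (0 : AddCircle (1:ℝ))), ?_, rfl⟩
  infer_instance

lemma HXiSet_bddAbove (Ξ : C(Torus n, ℝ)) (P : Fin n → ℝ) :
    BddAbove { r : ℝ | ∃ μ : Measure (Torus n), IsProbabilityMeasure μ ∧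
      r = (∫ y, Ξ y ∂μ) + Fdir μ P } := by
  refine ⟨‖Ξ‖ + vnsq P / 2, ?_⟩
  rintro r ⟨μ, hμ, rfl⟩
  have h1 := xi_int_le Ξ μ
  have h2 := Fdir_le_half_vnsq μ P
  exact add_le_add h1 h2

end HXiAux
/-- existence of a maximizer `μ₀` of `Ĥ_Ξ(P)`, and of
`J ∈ ∂_P F(μ₀,·) ⊆ ∂_P Ĥ_Ξ` such that `μ₀` also maximizes `Ĥ*_Ξ(J)`. -/
theorem HXi_maximizer_exists (n : ℕ) (hn : 1 ≤ n) (Ξ : C(Torus n, ℝ)) (P : Fin n → ℝ) :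
    ∃ μ0 : Measure (Torus n), IsProbabilityMeasure μ0 ∧
      HXi Ξ P = (∫ y, Ξ y ∂μ0) + Fdir μ0 P ∧
      ∃ J : Fin n → ℝ, InSubgradF μ0 P J ∧ InSubgradH Ξ P J ∧
        HXiStar Ξ J = ((∫ y, Ξ y ∂μ0 : ℝ) : EReal) - FdirStar μ0 J := by
  classical
  have hn0 : 0 < n := hn
  set w := HXi Ξ P with hw
  -- maximizing sequence
  have hseq : ∀ k : ℕ, ∃ μ : Measure (Torus n), IsProbabilityMeasure μ ∧
      w - 1/((k:ℝ)+1) < (∫ y, Ξ y ∂μ) + Fdir μ P := by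
    intro k
    have hpos : (0:ℝ) < 1/((k:ℝ)+1) := by positivity
    have hlt : w - 1/((k:ℝ)+1) < sSup { r : ℝ | ∃ μ : Measure (Torus n),
        IsProbabilityMeasure μ ∧ r = (∫ y, Ξ y ∂μ) + Fdir μ P } := by
      have hws : w = sSup { r : ℝ | ∃ μ : Measure (Torus n),
          IsProbabilityMeasure μ ∧ r = (∫ y, Ξ y ∂μ) + Fdir μ P } := rfl
      linarith [hws ▸ (by linarith : w - 1/((k:ℝ)+1) < w)]
    obtain ⟨r, hrmem, hr⟩ := exists_lt_of_lt_csSup (HXiAux.HXiSet_nonempty Ξ P) hlt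
    obtain ⟨μ, hμ, rfl⟩ := hrmem
    exact ⟨μ, hμ, hr⟩
  choose μk hμk hvk using hseq
  set U : Ultrafilter ℕ := Ultrafilter.of (atTop : Filter ℕ) with hU
  have hUle : (U : Filter ℕ) ≤ atTop := Ultrafilter.of_le _
  set μ0 : Measure (Torus n) := HXiAux.muLim hn0 U μk with hμ0
  have hprob : IsProbabilityMeasure μ0 := HXiAux.muLim_prob hn0 U μk hμk
  haveI := hprob
  refine ⟨μ0, hprob, ?_⟩
  -- decomposition of the test integrand
  have hdecomp : ∀ (φ : (Fin n → ℝ) → ℝ), IsC1Torus φ →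
      ∀ (μ : Measure (Torus n)), IsProbabilityMeasure μ →
      (∫ y, (Ξ (Tproj n (Trep n y)) + (1/2) * vnsq (vgrad φ (Trep n y) + P)) ∂μ)
        = (∫ y, Ξ y ∂μ) + (1/2) * ∫ y, vnsq (vgrad φ (Trep n y) + P) ∂μ := by
    intro φ hφ μ hμp
    haveI := hμp
    have hpt : ∀ y : Torus n, Ξ (Tproj n (Trep n y)) + (1/2) * vnsq (vgrad φ (Trep n y) + P)
        = Ξ y + (1/2) * vnsq (vgrad φ (Trep n y) + P) := by
      intro y
      rw [HXiAux.tproj_trep]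
    rw [MeasureTheory.integral_congr_ae (Filter.Eventually.of_forall hpt),
      MeasureTheory.integral_add (HXiAux.xi_integrable Ξ μ)
        ((HXiAux.trep_comp_integrable (HXiAux.integrand_continuous hφ.1 P) μ).const_mul (1/2)),
      MeasureTheory.integral_const_mul]
  -- key inequality
  have key : ∀ (φ : (Fin n → ℝ) → ℝ), IsC1Torus φ →
      w ≤ (∫ y, Ξ y ∂μ0) + (1/2) * ∫ y, vnsq (vgrad φ (Trep n y) + P) ∂μ0 := by
    intro φ hφ
    set G : (Fin n → ℝ) → ℝ := fun x => Ξ (Tproj n x) + (1/2) * vnsq (vgrad φ x + P)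
      with hGdef
    have hGcont : Continuous G :=
      (Ξ.continuous.comp HXiAux.tproj_continuous).add
        (continuous_const.mul (HXiAux.integrand_continuous hφ.1 P))
    have hGper : ZPeriodic G := by
      intro x z
      simp only [hGdef]
      rw [HXiAux.tproj_add_int, HXiAux.vgrad_periodic hφ.1 hφ.2]
    have hbound : ∀ k : ℕ, w - 1/((k:ℝ)+1) ≤ ∫ y, G (Trep n y) ∂(μk k) := by
      intro k
      haveI := hμk k
      have hd := hdecomp φ hφ (μk k) (hμk k)
      have hF : Fdir (μk k) P ≤ (1/2) * ∫ y, vnsq (vgrad φ (Trep n y) + P) ∂(μk k) :=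
        HXiAux.Fdir_le_of_mem (μk k) P ⟨φ, hφ, rfl⟩
      have hv := hvk k
      show w - 1/((k:ℝ)+1) ≤ ∫ y, (Ξ (Tproj n (Trep n y))
        + (1/2) * vnsq (vgrad φ (Trep n y) + P)) ∂(μk k)
      rw [hd]
      linarith
    obtain ⟨C, hC⟩ := HXiAux.trep_comp_bound (n := n) hGcont
    have hCk : ∀ k : ℕ, (∫ y, G (Trep n y) ∂(μk k)) ∈ Set.Icc (-C) C := by
      intro k
      haveI := hμk k
      have := MeasureTheory.norm_integral_le_of_norm_le_const
        (f := fun y : Torus n => G (Trep n y)) (μ := μk k) (C := C)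
        (MeasureTheory.ae_of_all _ fun y => by simpa [Real.norm_eq_abs] using hC y)
      rw [probReal_univ, mul_one, Real.norm_eq_abs] at this
      exact abs_le.mp this
    have hL : Tendsto (fun k => ∫ y, G (Trep n y) ∂(μk k)) (U : Filter ℕ)
        (𝓝 (HXiAux.ulim U (fun k => ∫ y, G (Trep n y) ∂(μk k)))) :=
      HXiAux.tendsto_ulim U hCk
    have hbase : Tendsto (fun k : ℕ => w - 1/((k:ℝ)+1)) (U : Filter ℕ) (𝓝 w) := by
      apply Tendsto.mono_left _ hUle
      simpa using (tendsto_const_nhds (x := w)).sub tendsto_one_div_add_atTop_nhds_zero_nat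
    have hwL : w ≤ HXiAux.ulim U (fun k => ∫ y, G (Trep n y) ∂(μk k)) :=
      le_of_tendsto_of_tendsto' hbase hL hbound
    have hfin := HXiAux.muLim_bound hn0 U μk hμk G hGcont hGper _ hL
    have hd0 := hdecomp φ hφ μ0 hprob
    calc w ≤ HXiAux.ulim U (fun k => ∫ y, G (Trep n y) ∂(μk k)) := hwL
      _ ≤ ∫ y, G (Trep n y) ∂μ0 := hfin
      _ = (∫ y, Ξ y ∂μ0) + (1/2) * ∫ y, vnsq (vgrad φ (Trep n y) + P) ∂μ0 := hd0
  -- part 1 : μ0 attains the sup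
  have hFd : w - (∫ y, Ξ y ∂μ0) ≤ Fdir μ0 P := by
    rw [HXiAux.Fdir_eq]
    have h2 : 2*(w - (∫ y, Ξ y ∂μ0)) ≤ sInf (HXiAux.Fset μ0 P) := by
      apply le_csInf (HXiAux.Fset_nonempty μ0 P)
      rintro r ⟨φ, hφ, rfl⟩
      have := key φ hφ
      linarith
    linarith
  have hle2 : (∫ y, Ξ y ∂μ0) + Fdir μ0 P ≤ w :=
    le_csSup (HXiAux.HXiSet_bddAbove Ξ P) ⟨μ0, hprob, rfl⟩
  have hEq : w = (∫ y, Ξ y ∂μ0) + Fdir μ0 P := le_antisymm (by linarith) hle2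
  refine ⟨hEq, ?_⟩
  -- part 2 : the subgradient
  obtain ⟨J, hJ⟩ := HXiAux.exists_subgrad
    (f := fun x => Fdir μ0 x)
    (fun x y a b ha hb hab => HXiAux.Fdir_convex μ0 x y a b ha hb hab)
    (HXiAux.Fdir_epi_open μ0) P
  refine ⟨J, fun P' => hJ P', ?_, ?_⟩
  · -- InSubgradH
    intro P'
    have h1 : (∫ y, Ξ y ∂μ0) + Fdir μ0 P' ≤ HXi Ξ P' :=
      le_csSup (HXiAux.HXiSet_bddAbove Ξ P') ⟨μ0, hprob, rfl⟩
    have h2 := hJ P'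
    show HXi Ξ P' ≥ HXi Ξ P + vdot J (P' - P)
    rw [← hw]
    linarith
  · -- the HXiStar equality
    have hFstar0 : FdirStar μ0 J = ((vdot P J - Fdir μ0 P : ℝ) : EReal) := by
      apply le_antisymm
      · apply iSup_le
        intro P'
        rw [EReal.coe_le_coe_iff]
        have h1 := hJ P'
        have h2 := HXiAux.vdot_J_sub J P' P
        linarith
      · exact le_iSup (fun P' => ((vdot P' J - Fdir μ0 P' : ℝ) : EReal)) P
    have hstar_ge : ∀ (μ : Measure (Torus n)),
        ((vdot P J - Fdir μ P : ℝ) : EReal) ≤ FdirStar μ J :=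
      fun μ => le_iSup (fun P' => ((vdot P' J - Fdir μ P' : ℝ) : EReal)) P
    have hRHS : ((∫ y, Ξ y ∂μ0 : ℝ) : EReal) - FdirStar μ0 J
        = ((w - vdot P J : ℝ) : EReal) := by
      rw [hFstar0, ← EReal.coe_sub]
      exact congrArg _ (by linarith)
    rw [hRHS]
    apply le_antisymm
    · apply sSup_le
      rintro r ⟨μ, hμp, rfl⟩
      haveI := hμp
      calc ((∫ y, Ξ y ∂μ : ℝ) : EReal) - FdirStar μ J
          ≤ ((∫ y, Ξ y ∂μ : ℝ) : EReal) - ((vdot P J - Fdir μ P : ℝ) : EReal) :=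
            EReal.sub_le_sub (le_refl _) (hstar_ge μ)
        _ = (((∫ y, Ξ y ∂μ) - (vdot P J - Fdir μ P) : ℝ) : EReal) := (EReal.coe_sub _ _).symm
        _ ≤ ((w - vdot P J : ℝ) : EReal) := by
            rw [EReal.coe_le_coe_iff]
            have h3 : (∫ y, Ξ y ∂μ) + Fdir μ P ≤ w :=
              le_csSup (HXiAux.HXiSet_bddAbove Ξ P) ⟨μ, hμp, rfl⟩
            linarith
    · apply le_sSup
      refine ⟨μ0, hprob, ?_⟩
      rw [hFstar0, ← EReal.coe_sub]
      exact congrArg _ (by linarith)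

end
end
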